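/- arXiv:1811.02431 — 7 statements merged into one kernel-verified Lean document; each statement's English description precedes it below -/
import Mathlib

section
/- Given a formal one-parameter deformation (ξ_t, η_t, φ_t) of an A-module homomorphism φ: M → N, the linear-term triple (ξ_1, η_1, φ_1) is a 1-cocycle in the deformation complex C^*(φ); that is, δξ_1 = 0 in C^2(A;End(M)), δη_1 = 0 in C^2(A;End(N)), and φξ_1 − η_1φ − δφ_1 = 0 in C^1(A;Hom_k(M,N)). -/
/-
The coefficient of `t` in each deformation equation involves only the indices `(0, 1)` and
`(1, 0)`; since `ξ₀`, `η₀`, `φ₀` are the undeformed structures, these three linear equations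
are, after rearranging, exactly the three components of the cocycle condition.
-/

open Finset

variable {k A M N : Type*} [CommRing k] [Ring A] [Algebra k A]
  [AddCommGroup M] [Module k M] [AddCommGroup N] [Module k N]

/-- `(ξ_t = Σ ξᵢ tⁱ, η_t = Σ ηᵢ tⁱ, φ_t = Σ φᵢ tⁱ)` is a formal one-parameter deformation
of the `A`-module homomorphism `φ : M → N`, where the module structures on `M` and `N` are
given by the algebra homomorphisms `ξ₀ : A → End_k(M)` and `η₀ : A → End_k(N)`.
The conditions `ξ_t(rs) = ξ_t(r)ξ_t(s)`, `η_t(rs) = η_t(r)η_t(s)` and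
`φ_t(ξ_t(r)m) = η_t(r)φ_t(m)` are written out coefficientwise. -/
def IsFormalDeformation (ξ0 : A →ₐ[k] Module.End k M) (η0 : A →ₐ[k] Module.End k N)
    (φ : M →ₗ[k] N) (ξ : ℕ → (A →ₗ[k] Module.End k M)) (η : ℕ → (A →ₗ[k] Module.End k N))
    (Φ : ℕ → (M →ₗ[k] N)) : Prop :=
  ξ 0 = ξ0.toLinearMap ∧ η 0 = η0.toLinearMap ∧ Φ 0 = φ ∧
  (∀ (l : ℕ) (r s : A), ξ l (r * s) = ∑ ij ∈ antidiagonal l, ξ ij.1 r * ξ ij.2 s) ∧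
  (∀ (l : ℕ) (r s : A), η l (r * s) = ∑ ij ∈ antidiagonal l, η ij.1 r * η ij.2 s) ∧
  (∀ (l : ℕ) (r : A), ∑ ij ∈ antidiagonal l, Φ ij.1 ∘ₗ (ξ ij.2 r : M →ₗ[k] M) =
    ∑ ij ∈ antidiagonal l, (η ij.1 r : N →ₗ[k] N) ∘ₗ Φ ij.2)

/-- A deformation of order `n` of the module homomorphism `φ : M → N`: the deformation
equations hold modulo `t^{n+1}`, i.e. for all `l ≤ n`. -/
def IsDeformationOfOrder (ξ0 : A →ₐ[k] Module.End k M) (η0 : A →ₐ[k] Module.End k N)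
    (φ : M →ₗ[k] N) (ξ : ℕ → (A →ₗ[k] Module.End k M)) (η : ℕ → (A →ₗ[k] Module.End k N))
    (Φ : ℕ → (M →ₗ[k] N)) (n : ℕ) : Prop :=
  ξ 0 = ξ0.toLinearMap ∧ η 0 = η0.toLinearMap ∧ Φ 0 = φ ∧
  (∀ l ≤ n, ∀ r s : A, ξ l (r * s) = ∑ ij ∈ antidiagonal l, ξ ij.1 r * ξ ij.2 s) ∧
  (∀ l ≤ n, ∀ r s : A, η l (r * s) = ∑ ij ∈ antidiagonal l, η ij.1 r * η ij.2 s) ∧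
  (∀ l ≤ n, ∀ r : A, ∑ ij ∈ antidiagonal l, Φ ij.1 ∘ₗ (ξ ij.2 r : M →ₗ[k] M) =
    ∑ ij ∈ antidiagonal l, (η ij.1 r : N →ₗ[k] N) ∘ₗ Φ ij.2)

/-- `(u, v, w)` is a 1-cocycle in the deformation complex `C^*(φ)`:
`δu = 0` in `C²(A;End M)`, `δv = 0` in `C²(A;End N)` and `φu - vφ - δw = 0`
in `C¹(A;Hom_k(M,N))`. -/
def IsOneCocycle (ξ0 : A →ₐ[k] Module.End k M) (η0 : A →ₐ[k] Module.End k N)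
    (φ : M →ₗ[k] N) (u : A →ₗ[k] Module.End k M) (v : A →ₗ[k] Module.End k N)
    (w : M →ₗ[k] N) : Prop :=
  (∀ a b : A, ξ0 a * u b - u (a * b) + u a * ξ0 b = 0) ∧
  (∀ a b : A, η0 a * v b - v (a * b) + v a * η0 b = 0) ∧
  (∀ a : A, φ ∘ₗ (u a : M →ₗ[k] M) - (v a : N →ₗ[k] N) ∘ₗ φ -
    ((η0 a : N →ₗ[k] N) ∘ₗ w - w ∘ₗ (ξ0 a : M →ₗ[k] M)) = 0)

theorem Finset.Nat.sum_antidiagonal_one {β : Type*} [AddCommMonoid β] (f : ℕ × ℕ → β) :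
    ∑ ij ∈ antidiagonal 1, f ij = f (0, 1) + f (1, 0) := by
  rw [Finset.Nat.sum_antidiagonal_succ, Finset.Nat.antidiagonal_zero, sum_singleton]

theorem coboundary_eq_zero_of_mul_coeff_one {R S T : Type*} [CommSemiring R]
    [NonUnitalNonAssocSemiring S] [Module R S] [NonUnitalNonAssocRing T] [Module R T]
    (f : ℕ → S →ₗ[R] T)
    (h : ∀ r s : S, f 1 (r * s) = ∑ ij ∈ antidiagonal 1, f ij.1 r * f ij.2 s) (a b : S) :
    f 0 a * f 1 b - f 1 (a * b) + f 1 a * f 0 b = 0 := by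
  rw [h, Finset.Nat.sum_antidiagonal_one]
  abel

theorem sub_coboundary_eq_zero_of_comp_coeff_one {R P Q : Type*} [CommSemiring R]
    [AddCommGroup P] [Module R P] [AddCommGroup Q] [Module R Q]
    (f : ℕ → P →ₗ[R] Q) (x : ℕ → Module.End R P) (y : ℕ → Module.End R Q)
    (h : ∑ ij ∈ antidiagonal 1, f ij.1 ∘ₗ x ij.2 = ∑ ij ∈ antidiagonal 1, y ij.1 ∘ₗ f ij.2) :
    f 0 ∘ₗ x 1 - y 1 ∘ₗ f 0 - (y 0 ∘ₗ f 1 - f 1 ∘ₗ x 0) = 0 := by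
  simp only [Finset.Nat.sum_antidiagonal_one] at h
  rw [sub_sub, sub_eq_zero, eq_sub_of_add_eq h]
  abel

section

variable {ξ0 : A →ₐ[k] Module.End k M}
    {η0 : A →ₐ[k] Module.End k N} {φ : M →ₗ[k] N} {ξ : ℕ → (A →ₗ[k] Module.End k M)}
    {η : ℕ → (A →ₗ[k] Module.End k N)} {Φ : ℕ → (M →ₗ[k] N)}

theorem IsFormalDeformation.isDeformationOfOrder
    (h : IsFormalDeformation ξ0 η0 φ ξ η Φ) (n : ℕ) : IsDeformationOfOrder ξ0 η0 φ ξ η Φ n :=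
  let ⟨hξ0, hη0, hΦ0, hξ, hη, hΦ⟩ := h
  ⟨hξ0, hη0, hΦ0, fun l _ => hξ l, fun l _ => hη l, fun l _ => hΦ l⟩

theorem IsDeformationOfOrder.isOneCocycle
    (h : IsDeformationOfOrder ξ0 η0 φ ξ η Φ 1) : IsOneCocycle ξ0 η0 φ (ξ 1) (η 1) (Φ 1) := by
  obtain ⟨hξ0, hη0, hΦ0, hξ, hη, hΦ⟩ := h
  refine ⟨fun a b => ?_, fun a b => ?_, fun a => ?_⟩
  · simpa only [hξ0, AlgHom.toLinearMap_apply] using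
      coboundary_eq_zero_of_mul_coeff_one ξ (hξ 1 le_rfl) a b
  · simpa only [hη0, AlgHom.toLinearMap_apply] using
      coboundary_eq_zero_of_mul_coeff_one η (hη 1 le_rfl) a b
  · simpa only [hξ0, hη0, hΦ0, AlgHom.toLinearMap_apply] using
      sub_coboundary_eq_zero_of_comp_coeff_one Φ (fun i => ξ i a) (fun i => η i a) (hΦ 1 le_rfl a)

end

/-- The infinitesimal `(ξ₁, η₁, φ₁)` of a formal one-parameter deformation
`(ξ_t, η_t, φ_t)` of the module homomorphism `φ` is a 1-cocycle in `C^*(φ)`. -/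
theorem infinitesimal_isOneCocycle (ξ0 : A →ₐ[k] Module.End k M)
    (η0 : A →ₐ[k] Module.End k N) (φ : M →ₗ[k] N)
    (ξ : ℕ → (A →ₗ[k] Module.End k M)) (η : ℕ → (A →ₗ[k] Module.End k N))
    (Φ : ℕ → (M →ₗ[k] N)) (h : IsFormalDeformation ξ0 η0 φ ξ η Φ) :
    IsOneCocycle ξ0 η0 φ (ξ 1) (η 1) (Φ 1) :=
  (h.isDeformationOfOrder 1).isOneCocycle
end

section
/- If (ξ_t, η_t, φ_t) is a formal deformation of φ: M → N with (ξ_i, η_i, φ_i) = 0 for 1 ≤ i ≤ n−1, then the n-infinitesimal (ξ_n, η_n, φ_n) is a 1-cocycle in the deformation complex C^*(φ). -/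
open Finset

variable {k A M N : Type*} [CommRing k] [Ring A] [Algebra k A]
  [AddCommGroup M] [Module k M] [AddCommGroup N] [Module k N]

/-! In the coefficient of `tⁿ` of each deformation equation, every mixed term `ξᵢξⱼ`, `φᵢξⱼ`,
`ηᵢφⱼ` with `0 < i, j` has an index strictly between `0` and `n`, so it vanishes; the three
surviving two-term identities are exactly the three cocycle conditions. -/

theorem Finset.Nat.sum_antidiagonal_eq_add_of_eq_zero {X : Type*} [AddCommMonoid X] {n : ℕ}
    (hn : n ≠ 0) (f : ℕ → ℕ → X) (hf : ∀ i j, 1 ≤ i → i < n → f i j = 0) :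
    ∑ ij ∈ antidiagonal n, f ij.1 ij.2 = f 0 n + f n 0 := by
  refine sum_eq_add_of_mem (f := fun ij : ℕ × ℕ => f ij.1 ij.2) (0, n) (n, 0) (by simp) (by simp)
    (by simp [hn]) ?_
  rintro ⟨i, j⟩ hij ⟨h0n, hn0⟩
  simp only [HasAntidiagonal.mem_antidiagonal] at hij
  simp only [ne_eq, Prod.mk.injEq] at h0n hn0
  exact hf i j (by omega) (by omega)

theorem hochschild_cocycle_of_mul_eq_sum_antidiagonal {B : Type*} [Ring B] [Algebra k B]
    (ρ₀ : A →ₐ[k] B) (ρ : ℕ → A →ₗ[k] B) {n : ℕ} (hn : n ≠ 0) (h₀ : ρ 0 = ρ₀.toLinearMap)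
    (hmul : ∀ r s : A, ρ n (r * s) = ∑ ij ∈ antidiagonal n, ρ ij.1 r * ρ ij.2 s)
    (hvanish : ∀ i, 1 ≤ i → i < n → ρ i = 0) (a b : A) :
    ρ₀ a * ρ n b - ρ n (a * b) + ρ n a * ρ₀ b = 0 := by
  rw [hmul, Finset.Nat.sum_antidiagonal_eq_add_of_eq_zero hn (fun i j => ρ i a * ρ j b)
    (fun i j hi hin => by simp [hvanish i hi hin]), h₀]
  simp only [AlgHom.toLinearMap_apply]
  abel

theorem intertwiner_cocycle_of_sum_antidiagonal_comp_eq (X : ℕ → Module.End k M)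
    (Y : ℕ → Module.End k N) (Φ : ℕ → M →ₗ[k] N) {n : ℕ} (hn : n ≠ 0)
    (hcomp : ∑ ij ∈ antidiagonal n, Φ ij.1 ∘ₗ X ij.2 = ∑ ij ∈ antidiagonal n, Y ij.1 ∘ₗ Φ ij.2)
    (hY : ∀ i, 1 ≤ i → i < n → Y i = 0) (hΦ : ∀ i, 1 ≤ i → i < n → Φ i = 0) :
    Φ 0 ∘ₗ X n - Y n ∘ₗ Φ 0 - (Y 0 ∘ₗ Φ n - Φ n ∘ₗ X 0) = 0 := by
  rw [Finset.Nat.sum_antidiagonal_eq_add_of_eq_zero hn (fun i j => Φ i ∘ₗ X j)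
      (fun i j hi hin => by simp [hΦ i hi hin]),
    Finset.Nat.sum_antidiagonal_eq_add_of_eq_zero hn (fun i j => Y i ∘ₗ Φ j)
      (fun i j hi hin => by simp [hY i hi hin])] at hcomp
  rw [← sub_eq_zero.mpr hcomp]
  abel

/-- If `(ξᵢ, ηᵢ, φᵢ) = 0` for `1 ≤ i ≤ n - 1`, then the `n`-infinitesimal
`(ξₙ, ηₙ, φₙ)` of the deformation `(ξ_t, η_t, φ_t)` is a 1-cocycle in `C^*(φ)`. -/
theorem nInfinitesimal_isOneCocycle (ξ0 : A →ₐ[k] Module.End k M)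
    (η0 : A →ₐ[k] Module.End k N) (φ : M →ₗ[k] N)
    (ξ : ℕ → (A →ₗ[k] Module.End k M)) (η : ℕ → (A →ₗ[k] Module.End k N))
    (Φ : ℕ → (M →ₗ[k] N)) (h : IsFormalDeformation ξ0 η0 φ ξ η Φ)
    (n : ℕ) (hn : 1 ≤ n)
    (hvanish : ∀ i, 1 ≤ i → i < n → ξ i = 0 ∧ η i = 0 ∧ Φ i = 0) :
    IsOneCocycle ξ0 η0 φ (ξ n) (η n) (Φ n) := by
  obtain ⟨hξ0, hη0, hΦ0, hξ, hη, hΦ⟩ := h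
  have hn0 : n ≠ 0 := Nat.one_le_iff_ne_zero.mp hn
  refine ⟨hochschild_cocycle_of_mul_eq_sum_antidiagonal ξ0 ξ hn0 hξ0 (hξ n)
      (fun i hi hin => (hvanish i hi hin).1),
    hochschild_cocycle_of_mul_eq_sum_antidiagonal η0 η hn0 hη0 (hη n)
      (fun i hi hin => (hvanish i hi hin).2.1), fun a => ?_⟩
  simpa [hξ0, hη0, hΦ0] using intertwiner_cocycle_of_sum_antidiagonal_comp_eq
    (fun i => ξ i a) (fun i => η i a) Φ hn0 (hΦ n a)
    (fun i hi hin => by simp [(hvanish i hi hin).2.1]) (fun i hi hin => (hvanish i hi hin).2.2)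
end

section
/- Let (ξ_t, η_t, φ_t) be a deformation of order n of a module homomorphism φ: M → N. Then the (n+1)-th obstruction cochain Ob_{n+1} = (O_1, O_2, O_3) ∈ C^2(φ), with O_1(a,b) = −Σ_{i+j=n+1, i,j>0} ξ_i(a)ξ_j(b), O_2(a,b) = −Σ_{i+j=n+1, i,j>0} η_i(a)η_j(b), and O_3(a) = Σ_{i+j=n+1, i,j>0} (η_i(a)∘φ_j − φ_i∘ξ_j(a)), is a 2-cocycle: d^2 Ob_{n+1} = 0. -/
open Finset

variable {k A M N : Type*} [CommRing k] [Ring A] [Algebra k A]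
  [AddCommGroup M] [Module k M] [AddCommGroup N] [Module k N]

/-- The differential `d¹(u,v,w) = (δu, δv, φu - vφ - δw)` of the deformation complex,
applied to a 1-cochain `(u,v,w) ∈ C¹(φ)`, written out as a triple of functions. -/
def dOne (ξ0 : A →ₐ[k] Module.End k M) (η0 : A →ₐ[k] Module.End k N) (φ : M →ₗ[k] N)
    (u : A →ₗ[k] Module.End k M) (v : A →ₗ[k] Module.End k N) (w : M →ₗ[k] N) :
    (A → A → Module.End k M) × (A → A → Module.End k N) × (A → (M →ₗ[k] N)) :=
  ⟨fun a b => ξ0 a * u b - u (a * b) + u a * ξ0 b,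
   fun a b => η0 a * v b - v (a * b) + v a * η0 b,
   fun a => φ ∘ₗ (u a : M →ₗ[k] M) - (v a : N →ₗ[k] N) ∘ₗ φ -
     ((η0 a : N →ₗ[k] N) ∘ₗ w - w ∘ₗ (ξ0 a : M →ₗ[k] M))⟩

/-- The `(n+1)`-th obstruction cochain `Ob_{n+1} = (O₁, O₂, O₃) ∈ C²(φ)` of a deformation
of order `n`: `O₁(a,b) = -Σ_{i+j=n+1, i,j>0} ξᵢ(a)ξⱼ(b)`,
`O₂(a,b) = -Σ_{i+j=n+1, i,j>0} ηᵢ(a)ηⱼ(b)`,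
`O₃(a) = Σ_{i+j=n+1, i,j>0} (ηᵢ(a)∘φⱼ - φᵢ∘ξⱼ(a))`. -/
def obstruction (ξ : ℕ → (A →ₗ[k] Module.End k M)) (η : ℕ → (A →ₗ[k] Module.End k N))
    (Φ : ℕ → (M →ₗ[k] N)) (n : ℕ) :
    (A → A → Module.End k M) × (A → A → Module.End k N) × (A → (M →ₗ[k] N)) :=
  ⟨fun a b => -∑ ij ∈ (antidiagonal (n + 1)).filter (fun ij => ij.1 ≠ 0 ∧ ij.2 ≠ 0),
      ξ ij.1 a * ξ ij.2 b,
   fun a b => -∑ ij ∈ (antidiagonal (n + 1)).filter (fun ij => ij.1 ≠ 0 ∧ ij.2 ≠ 0),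
      η ij.1 a * η ij.2 b,
   fun a => ∑ ij ∈ (antidiagonal (n + 1)).filter (fun ij => ij.1 ≠ 0 ∧ ij.2 ≠ 0),
      ((η ij.1 a : N →ₗ[k] N) ∘ₗ Φ ij.2 - Φ ij.1 ∘ₗ (ξ ij.2 a : M →ₗ[k] M))⟩


/-!
Write `ξ_t, η_t, φ_t` as polynomials truncated above degree `n`. The defects
`E(a,b) = ξ_t(a)ξ_t(b) - ξ_t(ab)` and `D(a) = φ_t ξ_t(a) - η_t(a)φ_t` are divisible by
`t^{n+1}`, with `t^{n+1}`-coefficients `-O₁(a,b)` and `-O₃(a)`. Associativity gives the exact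
identities
`E(ab,c) + E(a,b)ξ_t(c) = ξ_t(a)E(b,c) + E(a,bc)` and
`φ_t E_ξ(a,b) - E_η(a,b)φ_t = η_t(a)D(b) - D(ab) + D(a)ξ_t(b)`;
in the `t^{n+1}`-coefficient of a product with a factor divisible by `t^{n+1}` only the constant
term of the other factor survives, and this gives `d² Ob_{n+1} = 0`. For the third component,
`Hom(M,N)` is placed in the corner of `End(M × N)`, so that all products live in one ring.
-/

open Polynomial

section Defects

variable {R B : Type*} [Ring R]

def mulDefect [Mul B] (F : B → R) (a b : B) : R := F a * F b - F (a * b)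

def intertwiningDefect (P : R) (F G : B → R) (a : B) : R := P * F a - G a * P

theorem mulDefect_mul_add [Semigroup B] (F : B → R) (a b c : B) :
    mulDefect F (a * b) c + mulDefect F a b * F c =
      F a * mulDefect F b c + mulDefect F a (b * c) := by
  simp only [mulDefect, mul_assoc, sub_mul, mul_sub]
  abel

theorem mul_mulDefect_sub_mulDefect_mul [Mul B] (P : R) (F G : B → R) (a b : B) :
    P * mulDefect F a b - mulDefect G a b * P =
      G a * intertwiningDefect P F G b - intertwiningDefect P F G (a * b) +
        intertwiningDefect P F G a * F b := by
  simp only [mulDefect, intertwiningDefect, mul_assoc, sub_mul, mul_sub]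
  abel

end Defects

namespace Polynomial

variable {R : Type*} [Semiring R] {p : R[X]} {m : ℕ}

theorem coeff_mul_of_X_pow_dvd_left (h : X ^ m ∣ p) (q : R[X]) :
    (p * q).coeff m = p.coeff m * q.coeff 0 := by
  obtain ⟨r, rfl⟩ := h
  simp [mul_assoc, coeff_X_pow_mul', mul_coeff_zero]

theorem coeff_mul_of_X_pow_dvd_right (h : X ^ m ∣ p) (q : R[X]) :
    (q * p).coeff m = q.coeff 0 * p.coeff m := by
  obtain ⟨r, rfl⟩ := h
  rw [← mul_assoc, ← (commute_X_pow q m).eq, mul_assoc]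
  simp [coeff_X_pow_mul', mul_coeff_zero]

end Polynomial

section Cocycle

variable {R B : Type*} [Ring R] {m : ℕ}

theorem coeff_mulDefect_isCocycle [Semigroup B] {F : B → R[X]}
    (hF : ∀ a b, X ^ m ∣ mulDefect F a b) (a b c : B) :
    (F a).coeff 0 * (mulDefect F b c).coeff m - (mulDefect F (a * b) c).coeff m +
      (mulDefect F a (b * c)).coeff m - (mulDefect F a b).coeff m * (F c).coeff 0 = 0 := by
  have key := congrArg (coeff · m) (mulDefect_mul_add F a b c)
  simp only [coeff_add, coeff_mul_of_X_pow_dvd_left (hF _ _),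
    coeff_mul_of_X_pow_dvd_right (hF _ _)] at key
  rw [← sub_eq_zero] at key
  rw [← neg_eq_zero, ← key]
  abel

theorem coeff_intertwiningDefect_isCocycle [Mul B] {P : R[X]} {F G : B → R[X]}
    (hF : ∀ a b, X ^ m ∣ mulDefect F a b) (hG : ∀ a b, X ^ m ∣ mulDefect G a b)
    (hP : ∀ a, X ^ m ∣ intertwiningDefect P F G a) (a b : B) :
    P.coeff 0 * (mulDefect F a b).coeff m - (mulDefect G a b).coeff m * P.coeff 0 -
      ((G a).coeff 0 * (intertwiningDefect P F G b).coeff m -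
        (intertwiningDefect P F G (a * b)).coeff m +
        (intertwiningDefect P F G a).coeff m * (F b).coeff 0) = 0 := by
  have key := congrArg (coeff · m) (mul_mulDefect_sub_mulDefect_mul P F G a b)
  simp only [coeff_add, coeff_sub, coeff_mul_of_X_pow_dvd_left (hP _),
    coeff_mul_of_X_pow_dvd_right (hP _), coeff_mul_of_X_pow_dvd_left (hG _ _),
    coeff_mul_of_X_pow_dvd_right (hF _ _)] at key
  rw [key, sub_self]

end Cocycle

section Truncation

variable {R : Type*} [Ring R] (n : ℕ)

noncomputable def truncSeq (f : ℕ → R) : R[X] :=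
  PowerSeries.trunc (n + 1) (PowerSeries.mk f)

theorem coeff_truncSeq (f : ℕ → R) (i : ℕ) :
    (truncSeq n f).coeff i = if i ≤ n then f i else 0 := by
  simp [truncSeq, PowerSeries.coeff_trunc]

theorem coeff_truncSeq_mul (f g : ℕ → R) (l : ℕ) :
    (truncSeq n f * truncSeq n g).coeff l =
      ∑ ij ∈ antidiagonal l with ij.1 ≤ n ∧ ij.2 ≤ n, f ij.1 * g ij.2 := by
  rw [coeff_mul, sum_filter]
  refine sum_congr rfl fun ij _ => ?_
  simp only [coeff_truncSeq]
  split_ifs <;> simp_all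

theorem coeff_truncSeq_mul_of_le (f g : ℕ → R) {l : ℕ} (hl : l ≤ n) :
    (truncSeq n f * truncSeq n g).coeff l = ∑ ij ∈ antidiagonal l, f ij.1 * g ij.2 := by
  rw [coeff_truncSeq_mul, filter_true_of_mem]
  intro ij hij
  rw [HasAntidiagonal.mem_antidiagonal] at hij
  omega

theorem coeff_truncSeq_mul_succ (f g : ℕ → R) :
    (truncSeq n f * truncSeq n g).coeff (n + 1) =
      ∑ ij ∈ antidiagonal (n + 1) with ij.1 ≠ 0 ∧ ij.2 ≠ 0, f ij.1 * g ij.2 := by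
  rw [coeff_truncSeq_mul]
  refine sum_congr (filter_congr fun ij hij => ?_) fun _ _ => rfl
  rw [HasAntidiagonal.mem_antidiagonal] at hij
  omega

end Truncation

section UpToOrder

variable {R B : Type*} [Ring R] {n : ℕ}

def IsMultiplicativeUpTo [Mul B] (f : ℕ → B → R) (n : ℕ) : Prop :=
  ∀ l ≤ n, ∀ a b : B, f l (a * b) = ∑ ij ∈ antidiagonal l, f ij.1 a * f ij.2 b

def IsIntertwiningUpTo (f g : ℕ → B → R) (p : ℕ → R) (n : ℕ) : Prop :=
  ∀ l ≤ n, ∀ a : B,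
    ∑ ij ∈ antidiagonal l, p ij.1 * f ij.2 a = ∑ ij ∈ antidiagonal l, g ij.1 a * p ij.2

def mulObstruction [Mul B] (f : ℕ → B → R) (n : ℕ) (a b : B) : R :=
  -∑ ij ∈ antidiagonal (n + 1) with ij.1 ≠ 0 ∧ ij.2 ≠ 0, f ij.1 a * f ij.2 b

def intertwiningObstruction (f g : ℕ → B → R) (p : ℕ → R) (n : ℕ) (a : B) : R :=
  ∑ ij ∈ antidiagonal (n + 1) with ij.1 ≠ 0 ∧ ij.2 ≠ 0,
    (g ij.1 a * p ij.2 - p ij.1 * f ij.2 a)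

theorem IsMultiplicativeUpTo.X_pow_dvd_mulDefect [Mul B] {f : ℕ → B → R}
    (hf : IsMultiplicativeUpTo f n) (a b : B) :
    X ^ (n + 1) ∣ mulDefect (fun a => truncSeq n (f · a)) a b := by
  refine X_pow_dvd_iff.mpr fun l hl => ?_
  rw [mulDefect, coeff_sub, coeff_truncSeq_mul_of_le n _ _ (by omega), coeff_truncSeq,
    if_pos (by omega), hf l (by omega), sub_self]

theorem coeff_mulDefect_truncSeq [Mul B] (f : ℕ → B → R) (a b : B) :
    (mulDefect (fun a => truncSeq n (f · a)) a b).coeff (n + 1) = -mulObstruction f n a b := by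
  simp [mulDefect, coeff_truncSeq_mul_succ, coeff_truncSeq, mulObstruction]

theorem IsIntertwiningUpTo.X_pow_dvd_intertwiningDefect {f g : ℕ → B → R} {p : ℕ → R}
    (hp : IsIntertwiningUpTo f g p n) (a : B) :
    X ^ (n + 1) ∣ intertwiningDefect (truncSeq n p) (fun a => truncSeq n (f · a))
      (fun a => truncSeq n (g · a)) a := by
  refine X_pow_dvd_iff.mpr fun l hl => ?_
  rw [intertwiningDefect, coeff_sub, coeff_truncSeq_mul_of_le n _ _ (by omega),
    coeff_truncSeq_mul_of_le n _ _ (by omega), hp l (by omega), sub_self]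

theorem coeff_intertwiningDefect_truncSeq (f g : ℕ → B → R) (p : ℕ → R) (a : B) :
    (intertwiningDefect (truncSeq n p) (fun a => truncSeq n (f · a))
      (fun a => truncSeq n (g · a)) a).coeff (n + 1) = -intertwiningObstruction f g p n a := by
  simp [intertwiningDefect, coeff_truncSeq_mul_succ, intertwiningObstruction]

theorem IsMultiplicativeUpTo.mulObstruction_isCocycle [Semigroup B] {f : ℕ → B → R}
    (hf : IsMultiplicativeUpTo f n) (a b c : B) :
    f 0 a * mulObstruction f n b c - mulObstruction f n (a * b) c +
      mulObstruction f n a (b * c) - mulObstruction f n a b * f 0 c = 0 := by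
  have h := coeff_mulDefect_isCocycle hf.X_pow_dvd_mulDefect a b c
  simp only [coeff_mulDefect_truncSeq, coeff_truncSeq, if_pos (Nat.zero_le n)] at h
  rw [← neg_eq_zero, ← h]
  noncomm_ring

theorem IsIntertwiningUpTo.intertwiningObstruction_isCocycle [Mul B] {f g : ℕ → B → R}
    {p : ℕ → R} (hp : IsIntertwiningUpTo f g p n) (hf : IsMultiplicativeUpTo f n)
    (hg : IsMultiplicativeUpTo g n) (a b : B) :
    p 0 * mulObstruction f n a b - mulObstruction g n a b * p 0 -
      (g 0 a * intertwiningObstruction f g p n b - intertwiningObstruction f g p n (a * b) +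
        intertwiningObstruction f g p n a * f 0 b) = 0 := by
  have h := coeff_intertwiningDefect_isCocycle hf.X_pow_dvd_mulDefect hg.X_pow_dvd_mulDefect
    hp.X_pow_dvd_intertwiningDefect a b
  simp only [coeff_mulDefect_truncSeq, coeff_intertwiningDefect_truncSeq, coeff_truncSeq,
    if_pos (Nat.zero_le n)] at h
  rw [← neg_eq_zero, ← h]
  noncomm_ring

end UpToOrder

section RingHom

variable {R S B : Type*} [Ring R] [Ring S] [Mul B] {n : ℕ} {f : ℕ → B → R}

theorem IsMultiplicativeUpTo.prodMk {g : ℕ → B → S} (hf : IsMultiplicativeUpTo f n)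
    (hg : IsMultiplicativeUpTo g n) : IsMultiplicativeUpTo (fun i a => (f i a, g i a)) n :=
  fun l hl a b => by simp only [Prod.mk_mul_mk, ← prod_mk_sum, hf l hl, hg l hl]

theorem IsMultiplicativeUpTo.map (φ : R →+* S) (hf : IsMultiplicativeUpTo f n) :
    IsMultiplicativeUpTo (fun i a => φ (f i a)) n :=
  fun l hl a b => by simp only [hf l hl, map_sum, map_mul]

theorem mulObstruction_prodMk (g : ℕ → B → S) (a b : B) :
    mulObstruction (fun i a => (f i a, g i a)) n a b =
      (mulObstruction f n a b, mulObstruction g n a b) := by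
  simp only [mulObstruction, Prod.mk_mul_mk, ← prod_mk_sum, Prod.neg_mk]

theorem map_mulObstruction (φ : R →+* S) (a b : B) :
    mulObstruction (fun i a => φ (f i a)) n a b = φ (mulObstruction f n a b) := by
  simp only [mulObstruction, map_neg, map_sum, map_mul]

end RingHom

section Corner

variable (k M N) in
@[simps]
def corner : (M →ₗ[k] N) →+ Module.End k (M × N) where
  toFun f := LinearMap.inr k M N ∘ₗ f ∘ₗ LinearMap.fst k M N
  map_zero' := rfl
  map_add' f g := by ext <;> simp

theorem corner_mul_prodMap (f : M →ₗ[k] N) (u : Module.End k M) (v : Module.End k N) :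
    corner k M N f * u.prodMap v = corner k M N (f ∘ₗ u) := by
  ext <;> simp

theorem prodMap_mul_corner (f : M →ₗ[k] N) (u : Module.End k M) (v : Module.End k N) :
    u.prodMap v * corner k M N f = corner k M N (v ∘ₗ f) := by
  ext <;> simp

theorem corner_injective : Function.Injective (corner k M N) := by
  intro f g hfg
  ext m
  simpa using LinearMap.congr_fun hfg (m, 0)

end Corner

theorem obstruction_hom_isCocycle {ξ : ℕ → (A →ₗ[k] Module.End k M)}
    {η : ℕ → (A →ₗ[k] Module.End k N)} {Φ : ℕ → (M →ₗ[k] N)} {n : ℕ}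
    (hξ : IsMultiplicativeUpTo (fun i => ⇑(ξ i)) n)
    (hη : IsMultiplicativeUpTo (fun i => ⇑(η i)) n)
    (hΦ : ∀ l ≤ n, ∀ r : A, ∑ ij ∈ antidiagonal l, Φ ij.1 ∘ₗ (ξ ij.2 r : M →ₗ[k] M) =
      ∑ ij ∈ antidiagonal l, (η ij.1 r : N →ₗ[k] N) ∘ₗ Φ ij.2) (a b : A) :
    Φ 0 ∘ₗ ((obstruction ξ η Φ n).1 a b : M →ₗ[k] M)
        - ((obstruction ξ η Φ n).2.1 a b : N →ₗ[k] N) ∘ₗ Φ 0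
        - ((η 0 a : N →ₗ[k] N) ∘ₗ (obstruction ξ η Φ n).2.2 b
            - (obstruction ξ η Φ n).2.2 (a * b)
            + (obstruction ξ η Φ n).2.2 a ∘ₗ (ξ 0 b : M →ₗ[k] M)) = 0 := by
  let ψ := LinearMap.prodMapRingHom k M N
  have hf := (hξ.prodMk hη).map ψ
  have hp : IsIntertwiningUpTo (fun i a => ψ (ξ i a, η i a)) (fun i a => ψ (ξ i a, η i a))
      (fun i => corner k M N (Φ i)) n := fun l hl r => by
    simp only [ψ, LinearMap.prodMapRingHom_apply, corner_mul_prodMap, prodMap_mul_corner,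
      ← map_sum, hΦ l hl r]
  have hQ (a : A) : intertwiningObstruction (fun i a => ψ (ξ i a, η i a))
      (fun i a => ψ (ξ i a, η i a)) (fun i => corner k M N (Φ i)) n a =
        corner k M N ((obstruction ξ η Φ n).2.2 a) := by
    simp only [intertwiningObstruction, obstruction, ψ, LinearMap.prodMapRingHom_apply,
      corner_mul_prodMap, prodMap_mul_corner, ← map_sub, ← map_sum]
  have H := hp.intertwiningObstruction_isCocycle hf hf a b
  rw [hQ, hQ, hQ, map_mulObstruction, mulObstruction_prodMk] at H
  simp only [ψ, LinearMap.prodMapRingHom_apply, corner_mul_prodMap, prodMap_mul_corner,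
    ← map_sub, ← map_add] at H
  exact corner_injective (H.trans (map_zero _).symm)

/-- The `(n+1)`-th obstruction cochain `Ob_{n+1}(φ_t) = (O₁,O₂,O₃)` of a deformation of
order `n` of `φ` is a 2-cocycle: `d² Ob_{n+1} = (δO₁, δO₂, φO₁ - O₂φ - δO₃) = 0`. -/
theorem obstruction_isTwoCocycle (ξ0 : A →ₐ[k] Module.End k M)
    (η0 : A →ₐ[k] Module.End k N) (φ : M →ₗ[k] N)
    (ξ : ℕ → (A →ₗ[k] Module.End k M)) (η : ℕ → (A →ₗ[k] Module.End k N))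
    (Φ : ℕ → (M →ₗ[k] N)) (n : ℕ) (h : IsDeformationOfOrder ξ0 η0 φ ξ η Φ n) :
    (∀ a b c : A, ξ0 a * (obstruction ξ η Φ n).1 b c - (obstruction ξ η Φ n).1 (a * b) c
        + (obstruction ξ η Φ n).1 a (b * c) - (obstruction ξ η Φ n).1 a b * ξ0 c = 0) ∧
    (∀ a b c : A, η0 a * (obstruction ξ η Φ n).2.1 b c - (obstruction ξ η Φ n).2.1 (a * b) c
        + (obstruction ξ η Φ n).2.1 a (b * c) - (obstruction ξ η Φ n).2.1 a b * η0 c = 0) ∧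
    (∀ a b : A, φ ∘ₗ ((obstruction ξ η Φ n).1 a b : M →ₗ[k] M)
        - ((obstruction ξ η Φ n).2.1 a b : N →ₗ[k] N) ∘ₗ φ
        - ((η0 a : N →ₗ[k] N) ∘ₗ (obstruction ξ η Φ n).2.2 b
            - (obstruction ξ η Φ n).2.2 (a * b)
            + (obstruction ξ η Φ n).2.2 a ∘ₗ (ξ0 b : M →ₗ[k] M)) = 0) := by
  obtain ⟨hξ0, hη0, hΦ0, hξ, hη, hΦ⟩ := h
  have eξ (a : A) : ξ0 a = ξ 0 a := by rw [hξ0]; rfl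
  have eη (a : A) : η0 a = η 0 a := by rw [hη0]; rfl
  refine ⟨fun a b c => ?_, fun a b c => ?_, fun a b => ?_⟩
  · rw [eξ, eξ]
    exact IsMultiplicativeUpTo.mulObstruction_isCocycle hξ a b c
  · rw [eη, eη]
    exact IsMultiplicativeUpTo.mulObstruction_isCocycle hη a b c
  · rw [eη, eξ, ← hΦ0]
    exact obstruction_hom_isCocycle hξ hη hΦ a b
end

section
/- A deformation (ξ_t, η_t, φ_t) of order n of a module homomorphism φ extends to a deformation of order n+1 if and only if the cohomology class of the (n+1)-th obstruction cochain Ob_{n+1}(φ_t) in H^2(φ) vanishes. -/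
open Finset

variable {k A M N : Type*} [CommRing k] [Ring A] [Algebra k A]
  [AddCommGroup M] [Module k M] [AddCommGroup N] [Module k N]

/-!
Splitting off the boundary terms `(0, n+1)` and `(n+1, 0)` of each antidiagonal sum, the
deformation equations at `t^{n+1}` read `d¹(ξ_{n+1}, η_{n+1}, φ_{n+1}) = Ob_{n+1}`, and
`Ob_{n+1}` only involves coefficients of index `≤ n`. Hence an extension exists iff `Ob_{n+1}`
is a coboundary, and any primitive `(u, v, w)` can be taken as the new top coefficients.
-/

lemma le_of_mem_filter_antidiagonal_succ {n : ℕ} {ij : ℕ × ℕ}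
    (h : ij ∈ (antidiagonal (n + 1)).filter (fun ij => ij.1 ≠ 0 ∧ ij.2 ≠ 0)) :
    ij.1 ≤ n ∧ ij.2 ≤ n := by
  rw [mem_filter, HasAntidiagonal.mem_antidiagonal] at h
  omega

lemma sum_filter_antidiagonal_succ_congr {E : Type*} [AddCommMonoid E] {n : ℕ}
    {F G : ℕ × ℕ → E} (h : ∀ i ≤ n, ∀ j ≤ n, F (i, j) = G (i, j)) :
    ∑ ij ∈ (antidiagonal (n + 1)).filter (fun ij => ij.1 ≠ 0 ∧ ij.2 ≠ 0), F ij =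
      ∑ ij ∈ (antidiagonal (n + 1)).filter (fun ij => ij.1 ≠ 0 ∧ ij.2 ≠ 0), G ij :=
  sum_congr rfl fun _ hij => h _ (le_of_mem_filter_antidiagonal_succ hij).1 _
    (le_of_mem_filter_antidiagonal_succ hij).2

lemma sum_antidiagonal_succ_eq_add_sum_filter {E : Type*} [AddCommMonoid E] (n : ℕ)
    (F : ℕ × ℕ → E) :
    ∑ ij ∈ antidiagonal (n + 1), F ij = F (0, n + 1) + F (n + 1, 0) +
      ∑ ij ∈ (antidiagonal (n + 1)).filter (fun ij => ij.1 ≠ 0 ∧ ij.2 ≠ 0), F ij := by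
  have hcompl : (antidiagonal (n + 1)).filter (fun ij => ¬(ij.1 ≠ 0 ∧ ij.2 ≠ 0)) =
      {(0, n + 1), (n + 1, 0)} := by
    ext ⟨i, j⟩
    simp only [mem_filter, HasAntidiagonal.mem_antidiagonal, mem_insert, mem_singleton,
      Prod.mk.injEq]
    omega
  rw [← sum_filter_not_add_sum_filter _ (fun ij => ij.1 ≠ 0 ∧ ij.2 ≠ 0), hcompl,
    sum_pair (by simp)]

lemma eq_sum_antidiagonal_succ_iff {E : Type*} [AddCommGroup E] (n : ℕ) (x : E)
    (F : ℕ × ℕ → E) :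
    x = ∑ ij ∈ antidiagonal (n + 1), F ij ↔ F (0, n + 1) - x + F (n + 1, 0) =
      -∑ ij ∈ (antidiagonal (n + 1)).filter (fun ij => ij.1 ≠ 0 ∧ ij.2 ≠ 0), F ij := by
  rw [sum_antidiagonal_succ_eq_add_sum_filter, ← sub_eq_zero, ← neg_eq_zero,
    ← sub_eq_zero (a := F (0, n + 1) - x + _)]
  constructor <;> intro h <;> rw [← h] <;> abel

lemma sum_antidiagonal_succ_eq_iff {E : Type*} [AddCommGroup E] (n : ℕ) (F G : ℕ × ℕ → E) :
    ∑ ij ∈ antidiagonal (n + 1), F ij = ∑ ij ∈ antidiagonal (n + 1), G ij ↔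
      F (0, n + 1) - G (n + 1, 0) - (G (0, n + 1) - F (n + 1, 0)) =
        ∑ ij ∈ (antidiagonal (n + 1)).filter (fun ij => ij.1 ≠ 0 ∧ ij.2 ≠ 0),
          (G ij - F ij) := by
  rw [sum_antidiagonal_succ_eq_add_sum_filter, sum_antidiagonal_succ_eq_add_sum_filter,
    sum_sub_distrib, ← sub_eq_zero, ← sub_eq_zero (a := F (0, n + 1) - _ - _)]
  constructor <;> intro h <;> rw [← h] <;> abel

/-- The three deformation equations, compared at the coefficient of `t^l`. -/
def DeformationEquationsHoldAt (ξ : ℕ → (A →ₗ[k] Module.End k M))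
    (η : ℕ → (A →ₗ[k] Module.End k N)) (Φ : ℕ → (M →ₗ[k] N)) (l : ℕ) : Prop :=
  (∀ r s : A, ξ l (r * s) = ∑ ij ∈ antidiagonal l, ξ ij.1 r * ξ ij.2 s) ∧
  (∀ r s : A, η l (r * s) = ∑ ij ∈ antidiagonal l, η ij.1 r * η ij.2 s) ∧
  (∀ r : A, ∑ ij ∈ antidiagonal l, Φ ij.1 ∘ₗ (ξ ij.2 r : M →ₗ[k] M) =
    ∑ ij ∈ antidiagonal l, (η ij.1 r : N →ₗ[k] N) ∘ₗ Φ ij.2)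

section

variable {ξ0 : A →ₐ[k] Module.End k M} {η0 : A →ₐ[k] Module.End k N} {φ : M →ₗ[k] N}
  {ξ ξ' : ℕ → (A →ₗ[k] Module.End k M)} {η η' : ℕ → (A →ₗ[k] Module.End k N)}
  {Φ Φ' : ℕ → (M →ₗ[k] N)} {n : ℕ}

lemma isDeformationOfOrder_succ_iff :
    IsDeformationOfOrder ξ0 η0 φ ξ η Φ (n + 1) ↔
      IsDeformationOfOrder ξ0 η0 φ ξ η Φ n ∧ DeformationEquationsHoldAt ξ η Φ (n + 1) := by
  simp only [IsDeformationOfOrder, DeformationEquationsHoldAt, Nat.le_succ_iff, or_imp,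
    forall_and, forall_eq]
  tauto

lemma IsDeformationOfOrder.congr (h : IsDeformationOfOrder ξ0 η0 φ ξ η Φ n)
    (hξ : ∀ i ≤ n, ξ' i = ξ i) (hη : ∀ i ≤ n, η' i = η i) (hΦ : ∀ i ≤ n, Φ' i = Φ i) :
    IsDeformationOfOrder ξ0 η0 φ ξ' η' Φ' n := by
  obtain ⟨hξ0, hη0, hΦ0, hξm, hηm, hΦm⟩ := h
  have hle {l : ℕ} {ij : ℕ × ℕ} (hl : l ≤ n) (hij : ij ∈ antidiagonal l) :
      ij.1 ≤ n ∧ ij.2 ≤ n :=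
    ⟨(HasAntidiagonal.antidiagonal.fst_le hij).trans hl,
      (HasAntidiagonal.antidiagonal.snd_le hij).trans hl⟩
  refine ⟨(hξ 0 n.zero_le).trans hξ0, (hη 0 n.zero_le).trans hη0, (hΦ 0 n.zero_le).trans hΦ0,
    fun l hl r s => ?_, fun l hl r s => ?_, fun l hl r => ?_⟩
  · rw [hξ l hl, hξm l hl]
    refine sum_congr rfl fun ij hij => ?_
    rw [hξ _ (hle hl hij).1, hξ _ (hle hl hij).2]
  · rw [hη l hl, hηm l hl]
    refine sum_congr rfl fun ij hij => ?_
    rw [hη _ (hle hl hij).1, hη _ (hle hl hij).2]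
  · convert hΦm l hl r using 1 <;> refine sum_congr rfl fun ij hij => ?_
    · rw [hΦ _ (hle hl hij).1, hξ _ (hle hl hij).2]
    · rw [hη _ (hle hl hij).1, hΦ _ (hle hl hij).2]

lemma obstruction_congr (hξ : ∀ i ≤ n, ξ' i = ξ i) (hη : ∀ i ≤ n, η' i = η i)
    (hΦ : ∀ i ≤ n, Φ' i = Φ i) : obstruction ξ' η' Φ' n = obstruction ξ η Φ n := by
  simp only [obstruction, Prod.mk.injEq]
  refine ⟨funext₂ fun a b => congrArg Neg.neg ?_, funext₂ fun a b => congrArg Neg.neg ?_,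
    funext fun a => ?_⟩ <;> refine sum_filter_antidiagonal_succ_congr fun i hi j hj => ?_
  · rw [hξ i hi, hξ j hj]
  · rw [hη i hi, hη j hj]
  · rw [hξ j hj, hη i hi, hΦ i hi, hΦ j hj]

lemma deformationEquationsHoldAt_succ_iff (hξ0 : ξ 0 = ξ0.toLinearMap)
    (hη0 : η 0 = η0.toLinearMap) (hΦ0 : Φ 0 = φ) :
    DeformationEquationsHoldAt ξ η Φ (n + 1) ↔
      dOne ξ0 η0 φ (ξ (n + 1)) (η (n + 1)) (Φ (n + 1)) = obstruction ξ η Φ n := by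
  simp only [DeformationEquationsHoldAt, dOne, obstruction, Prod.mk.injEq, funext_iff]
  refine and_congr (forall₂_congr fun r s => ?_) (and_congr (forall₂_congr fun r s => ?_)
    (forall_congr' fun r => ?_))
  · rw [eq_sum_antidiagonal_succ_iff]
    simp only [hξ0, AlgHom.toLinearMap_apply]
  · rw [eq_sum_antidiagonal_succ_iff]
    simp only [hη0, AlgHom.toLinearMap_apply]
  · rw [sum_antidiagonal_succ_eq_iff]
    simp only [hξ0, hη0, hΦ0, AlgHom.toLinearMap_apply]

end

/-- A deformation `(ξ_t, η_t, φ_t)` of order `n` of `φ` extends to a deformation of order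
`n+1` if and only if the cohomology class of the `(n+1)`-th obstruction cochain vanishes,
i.e. `Ob_{n+1}(φ_t)` is a coboundary `d¹(ξ_{n+1}, η_{n+1}, φ_{n+1})`. -/
theorem extendsOrderSucc_iff_obstruction_isCoboundary (ξ0 : A →ₐ[k] Module.End k M)
    (η0 : A →ₐ[k] Module.End k N) (φ : M →ₗ[k] N)
    (ξ : ℕ → (A →ₗ[k] Module.End k M)) (η : ℕ → (A →ₗ[k] Module.End k N))
    (Φ : ℕ → (M →ₗ[k] N)) (n : ℕ) (h : IsDeformationOfOrder ξ0 η0 φ ξ η Φ n) :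
    (∃ (ξ' : ℕ → (A →ₗ[k] Module.End k M)) (η' : ℕ → (A →ₗ[k] Module.End k N))
        (Φ' : ℕ → (M →ₗ[k] N)),
      IsDeformationOfOrder ξ0 η0 φ ξ' η' Φ' (n + 1) ∧
      (∀ i ≤ n, ξ' i = ξ i) ∧ (∀ i ≤ n, η' i = η i) ∧ (∀ i ≤ n, Φ' i = Φ i)) ↔
    (∃ (u : A →ₗ[k] Module.End k M) (v : A →ₗ[k] Module.End k N) (w : M →ₗ[k] N),
      dOne ξ0 η0 φ u v w = obstruction ξ η Φ n) := by
  constructor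
  · rintro ⟨ξ', η', Φ', h', hξ, hη, hΦ⟩
    obtain ⟨⟨hξ0, hη0, hΦ0, -⟩, hsucc⟩ := isDeformationOfOrder_succ_iff.1 h'
    exact ⟨_, _, _, ((deformationEquationsHoldAt_succ_iff hξ0 hη0 hΦ0).1 hsucc).trans
      (obstruction_congr hξ hη hΦ)⟩
  · rintro ⟨u, v, w, hd⟩
    have hξ : ∀ i ≤ n, Function.update ξ (n + 1) u i = ξ i :=
      fun i hi => Function.update_of_ne (by omega) _ _
    have hη : ∀ i ≤ n, Function.update η (n + 1) v i = η i :=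
      fun i hi => Function.update_of_ne (by omega) _ _
    have hΦ : ∀ i ≤ n, Function.update Φ (n + 1) w i = Φ i :=
      fun i hi => Function.update_of_ne (by omega) _ _
    have h' := h.congr hξ hη hΦ
    refine ⟨_, _, _, isDeformationOfOrder_succ_iff.2 ⟨h', ?_⟩, hξ, hη, hΦ⟩
    rw [deformationEquationsHoldAt_succ_iff h'.1 h'.2.1 h'.2.2.1, obstruction_congr hξ hη hΦ]
    simpa only [Function.update_self] using hd
end

section
/- If the first deformation cohomology H^1(φ) of a module homomorphism φ: M → N vanishes, then φ is rigid: every formal one-parameter deformation of φ is equivalent to the trivial deformation. -/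
/-!
The trivializing isomorphism `(Ψ_t, Θ_t)` is built degree by degree. Suppose `ψ₀, …, ψₙ` and
`θ₀, …, θₙ` solve the equations `ξ₀(r) Ψ_t = Ψ_t ξ_t(r)`, `η₀(r) Θ_t = Θ_t η_t(r)` and
`φ Ψ_t = Θ_t φ_t` up to degree `n`. With `Ψ, Θ` truncated at degree `n`, the
degree `n + 1` coefficients `u(a)` of `Ψ ξ_t(a)`, `v(a)` of `Θ η_t(a)` and `w` of `Θ φ_t` form a
1-cocycle of `C^*(φ)`: expand the degree `n + 1` coefficient of `Ψ ξ_t(a) ξ_t(b)` and of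
`Θ φ_t ξ_t(a) = Θ η_t(a) φ_t` in the two ways allowed by associativity of Cauchy products.
As `H¹(φ) = 0`, `(u, v, w)` is the coboundary of some `(p, q)`, and
`ψ_{n+1} = p`, `θ_{n+1} = q` solve the equations in degree `n + 1`.
-/

open Finset

variable {k A M N : Type*} [CommRing k] [Ring A] [Algebra k A]
  [AddCommGroup M] [Module k M] [AddCommGroup N] [Module k N]

/-- `(Ψ_t = Σ ψᵢ tⁱ, Θ_t = Σ θᵢ tⁱ)` is a formal isomorphism from the deformation
`(ξ_t, η_t, φ_t)` to the deformation `(ξ'_t, η'_t, φ'_t)` of the module homomorphism `φ`: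
`ψ₀ = id`, `θ₀ = id`, `ξ'_t(r) Ψ_t = Ψ_t ξ_t(r)`, `η'_t(r) Θ_t = Θ_t η_t(r)` and
`φ'_t ∘ Ψ_t = Θ_t ∘ φ_t`, written out coefficientwise (Cauchy products). -/
def IsFormalIso (ξ : ℕ → (A →ₗ[k] Module.End k M)) (η : ℕ → (A →ₗ[k] Module.End k N))
    (Φ : ℕ → (M →ₗ[k] N)) (ξ' : ℕ → (A →ₗ[k] Module.End k M))
    (η' : ℕ → (A →ₗ[k] Module.End k N)) (Φ' : ℕ → (M →ₗ[k] N))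
    (ψ : ℕ → Module.End k M) (θ : ℕ → Module.End k N) : Prop :=
  ψ 0 = 1 ∧ θ 0 = 1 ∧
  (∀ (l : ℕ) (r : A), ∑ ij ∈ antidiagonal l, ξ' ij.1 r * ψ ij.2 =
    ∑ ij ∈ antidiagonal l, ψ ij.1 * ξ ij.2 r) ∧
  (∀ (l : ℕ) (r : A), ∑ ij ∈ antidiagonal l, η' ij.1 r * θ ij.2 =
    ∑ ij ∈ antidiagonal l, θ ij.1 * η ij.2 r) ∧
  (∀ l : ℕ, ∑ ij ∈ antidiagonal l, Φ' ij.1 ∘ₗ (ψ ij.2 : M →ₗ[k] M) =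
    ∑ ij ∈ antidiagonal l, (θ ij.1 : N →ₗ[k] N) ∘ₗ Φ ij.2)

/-- The trivial (constant) deformation coefficients attached to a structure map. -/
def trivialCoeffs {F : Type*} [Zero F] (f : F) : ℕ → F := fun i => if i = 0 then f else 0

section CauchyComp

variable {P Q R S : Type*} [AddCommGroup P] [Module k P] [AddCommGroup Q] [Module k Q]
  [AddCommGroup R] [Module k R] [AddCommGroup S] [Module k S]

/-- `(f ⋆ g) n` is the degree `n` coefficient of `f(t) ∘ g(t)`, where `f(t) = Σ f i tⁱ`. -/
def cauchyComp (f : ℕ → Q →ₗ[k] R) (g : ℕ → P →ₗ[k] Q) (n : ℕ) : P →ₗ[k] R :=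
  ∑ ij ∈ antidiagonal n, f ij.1 ∘ₗ g ij.2

infixl:70 " ⋆ " => cauchyComp

theorem cauchyComp_zero (f : ℕ → Q →ₗ[k] R) (g : ℕ → P →ₗ[k] Q) :
    (f ⋆ g) 0 = f 0 ∘ₗ g 0 := by
  simp [cauchyComp]

theorem cauchyComp_assoc (f : ℕ → R →ₗ[k] S) (g : ℕ → Q →ₗ[k] R) (h : ℕ → P →ₗ[k] Q) :
    f ⋆ g ⋆ h = f ⋆ (g ⋆ h) := by
  ext n x
  simp only [cauchyComp, LinearMap.sum_apply, LinearMap.comp_apply, map_sum, Finset.sum_sigma']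
  apply Finset.sum_nbij' (fun x ↦ ⟨(x.2.1, x.2.2 + x.1.2), (x.2.2, x.1.2)⟩)
    (fun x ↦ ⟨(x.1.1 + x.2.1, x.2.2), (x.1.1, x.2.1)⟩) <;>
    aesop (add simp [add_assoc])

theorem cauchyComp_congr_left {f f' : ℕ → Q →ₗ[k] R} (g : ℕ → P →ₗ[k] Q) {n : ℕ}
    (h : ∀ i ≤ n, f i = f' i) : (f ⋆ g) n = (f' ⋆ g) n :=
  Finset.sum_congr rfl fun ij hij => by rw [h ij.1 (HasAntidiagonal.antidiagonal.fst_le hij)]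

theorem trivialCoeffs_cauchyComp (c : Q →ₗ[k] R) (g : ℕ → P →ₗ[k] Q) (n : ℕ) :
    (trivialCoeffs c ⋆ g) n = c ∘ₗ g n := by
  rw [cauchyComp, Finset.sum_eq_single_of_mem (0, n) (by simp)]
  · rfl
  · rintro ⟨i, j⟩ hij hne
    have hi : i ≠ 0 := by rintro rfl; simp_all
    simp [trivialCoeffs, hi]

theorem cauchyComp_succ_of_le_eq_comp {X : ℕ → Q →ₗ[k] S} {T : ℕ → Q →ₗ[k] R}
    (c : R →ₗ[k] S) (Y : ℕ → P →ₗ[k] Q) {n : ℕ} (hX : ∀ i ≤ n, X i = c ∘ₗ T i)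
    (hT : T (n + 1) = 0) : (X ⋆ Y) (n + 1) = X (n + 1) ∘ₗ Y 0 + c ∘ₗ (T ⋆ Y) (n + 1) := by
  simp only [cauchyComp, Finset.Nat.sum_antidiagonal_succ', hT, LinearMap.zero_comp, zero_add]
  rw [← LinearMap.llcomp_apply' c, map_sum]
  congr 1
  refine Finset.sum_congr rfl fun ij hij => ?_
  rw [hX ij.1 (HasAntidiagonal.antidiagonal.fst_le hij), LinearMap.comp_assoc]
  rfl

theorem cauchyComp_succ_of_le_eq {X T : ℕ → Q →ₗ[k] R} (Y : ℕ → P →ₗ[k] Q) {n : ℕ}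
    (hX : ∀ i ≤ n, X i = T i) (hT : T (n + 1) = 0) :
    (X ⋆ Y) (n + 1) = X (n + 1) ∘ₗ Y 0 + (T ⋆ Y) (n + 1) := by
  simpa using cauchyComp_succ_of_le_eq_comp LinearMap.id Y (by simpa using hX) hT

end CauchyComp

theorem trivialCoeffs_apply {E : Type*} [AddCommGroup E] [Module k E] (f : A →ₗ[k] E) (r : A) :
    (fun i => trivialCoeffs f i r) = trivialCoeffs (f r) := by
  funext i
  by_cases hi : i = 0 <;> simp [trivialCoeffs, hi]

section Intertwining

variable {P : Type*} [AddCommGroup P] [Module k P]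

/-- The degree `l` coefficient of `ξ₀(r) Ψ_t = Ψ_t ξ_t(r)`. -/
def IntertwinesAt (ξ0 : A →ₐ[k] Module.End k P) (ξ : ℕ → A →ₗ[k] Module.End k P)
    (ψ : ℕ → Module.End k P) (l : ℕ) : Prop :=
  ∀ r : A, ξ0 r * ψ l = (ψ ⋆ fun j => ξ j r) l

theorem IntertwinesAt.congr {ξ0 : A →ₐ[k] Module.End k P} {ξ : ℕ → A →ₗ[k] Module.End k P}
    {ψ ψ' : ℕ → Module.End k P} {l : ℕ} (h : IntertwinesAt ξ0 ξ ψ l)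
    (hψ : ∀ i ≤ l, ψ i = ψ' i) : IntertwinesAt ξ0 ξ ψ' l := fun r => by
  rw [← hψ l le_rfl, h r, cauchyComp_congr_left _ hψ]

def cauchyMul (ψ : ℕ → Module.End k P) (ξ : ℕ → A →ₗ[k] Module.End k P) (n : ℕ) :
    A →ₗ[k] Module.End k P :=
  ∑ ij ∈ antidiagonal n, LinearMap.mulLeft k (ψ ij.1) ∘ₗ ξ ij.2

theorem cauchyMul_apply (ψ : ℕ → Module.End k P) (ξ : ℕ → A →ₗ[k] Module.End k P) (n : ℕ)
    (a : A) : cauchyMul ψ ξ n a = (ψ ⋆ fun j => ξ j a) n := by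
  simp [cauchyMul, cauchyComp, LinearMap.sum_apply, Module.End.mul_eq_comp]

theorem cauchyMul_isCocycle (ξ0 : A →ₐ[k] Module.End k P) {ξ : ℕ → A →ₗ[k] Module.End k P}
    (hξ0 : ξ 0 = ξ0.toLinearMap)
    (hξ : ∀ (l : ℕ) (r s : A), ξ l (r * s) = ∑ ij ∈ antidiagonal l, ξ ij.1 r * ξ ij.2 s)
    {ψ : ℕ → Module.End k P} {n : ℕ} (hψ : ∀ l ≤ n, IntertwinesAt ξ0 ξ ψ l)
    (hψ' : ψ (n + 1) = 0) (a b : A) :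
    ξ0 a * cauchyMul ψ ξ (n + 1) b - cauchyMul ψ ξ (n + 1) (a * b) +
      cauchyMul ψ ξ (n + 1) a * ξ0 b = 0 := by
  have hmul : (fun j => ξ j (a * b)) = (fun j => ξ j a) ⋆ fun j => ξ j b :=
    funext fun l => hξ l a b
  have key : cauchyMul ψ ξ (n + 1) (a * b) =
      cauchyMul ψ ξ (n + 1) a * ξ0 b + ξ0 a * cauchyMul ψ ξ (n + 1) b := by
    rw [cauchyMul_apply, hmul, ← cauchyComp_assoc,
      cauchyComp_succ_of_le_eq_comp (ξ0 a) _ (fun i hi => (hψ i hi a).symm) hψ', hξ0,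
      cauchyMul_apply, cauchyMul_apply]
    rfl
  rw [key]
  abel

theorem intertwinesAt_succ {ξ0 : A →ₐ[k] Module.End k P} {ξ : ℕ → A →ₗ[k] Module.End k P}
    (hξ0 : ξ 0 = ξ0.toLinearMap) {ψ ψ' : ℕ → Module.End k P} {n : ℕ}
    (hψ : ∀ i ≤ n, ψ i = ψ' i) (hψ' : ψ' (n + 1) = 0)
    (hcob : ∀ a, cauchyMul ψ' ξ (n + 1) a = ξ0 a * ψ (n + 1) - ψ (n + 1) * ξ0 a) :
    IntertwinesAt ξ0 ξ ψ (n + 1) := fun r => by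
  rw [cauchyComp_succ_of_le_eq _ hψ hψ', ← cauchyMul_apply, hcob, hξ0, AlgHom.toLinearMap_apply,
    ← Module.End.mul_eq_comp]
  abel

end Intertwining

section Trivialization

variable (ξ0 : A →ₐ[k] Module.End k M) (η0 : A →ₐ[k] Module.End k N) (φ : M →ₗ[k] N)
  (ξ : ℕ → A →ₗ[k] Module.End k M) (η : ℕ → A →ₗ[k] Module.End k N) (Φ : ℕ → M →ₗ[k] N)

def IsTrivializingAt (ψ : ℕ → Module.End k M) (θ : ℕ → Module.End k N) (l : ℕ) : Prop :=
  IntertwinesAt ξ0 ξ ψ l ∧ IntertwinesAt η0 η θ l ∧ φ ∘ₗ ψ l = (θ ⋆ Φ) l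

def IsCoboundaryOf (pq : Module.End k M × Module.End k N) (u : A →ₗ[k] Module.End k M)
    (v : A →ₗ[k] Module.End k N) (w : M →ₗ[k] N) : Prop :=
  (∀ a : A, u a = ξ0 a * pq.1 - pq.1 * ξ0 a) ∧ (∀ a : A, v a = η0 a * pq.2 - pq.2 * η0 a) ∧
    w = φ ∘ₗ pq.1 - pq.2 ∘ₗ φ

/-- `σ` is meant to choose a primitive `(p, q)` of each 1-cocycle `(u, v, w)`. -/
noncomputable def trivializingIso
    (σ : (A →ₗ[k] Module.End k M) → (A →ₗ[k] Module.End k N) → (M →ₗ[k] N) →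
      Module.End k M × Module.End k N) : ℕ → Module.End k M × Module.End k N
  | 0 => (1, 1)
  | n + 1 =>
    let ψ : ℕ → Module.End k M := fun i => if i ≤ n then (trivializingIso σ i).1 else 0
    let θ : ℕ → Module.End k N := fun i => if i ≤ n then (trivializingIso σ i).2 else 0
    σ (cauchyMul ψ ξ (n + 1)) (cauchyMul θ η (n + 1)) ((θ ⋆ Φ) (n + 1))

variable {ξ0 η0 φ ξ η Φ}

theorem trivializingIso_zero
    (σ : (A →ₗ[k] Module.End k M) → (A →ₗ[k] Module.End k N) → (M →ₗ[k] N) →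
      Module.End k M × Module.End k N) :
    trivializingIso ξ η Φ σ 0 = (1, 1) := by
  rw [trivializingIso]

theorem IsTrivializingAt.congr {ψ ψ' : ℕ → Module.End k M} {θ θ' : ℕ → Module.End k N} {l : ℕ}
    (h : IsTrivializingAt ξ0 η0 φ ξ η Φ ψ θ l) (hψ : ∀ i ≤ l, ψ i = ψ' i)
    (hθ : ∀ i ≤ l, θ i = θ' i) : IsTrivializingAt ξ0 η0 φ ξ η Φ ψ' θ' l := by
  obtain ⟨hξ, hη, hΦ⟩ := h
  refine ⟨hξ.congr hψ, hη.congr hθ, ?_⟩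
  rw [← hψ l le_rfl, hΦ, cauchyComp_congr_left _ hθ]

theorem isTrivializingAt_zero (hdef : IsFormalDeformation ξ0 η0 φ ξ η Φ)
    {ψ : ℕ → Module.End k M} {θ : ℕ → Module.End k N} (hψ : ψ 0 = 1) (hθ : θ 0 = 1) :
    IsTrivializingAt ξ0 η0 φ ξ η Φ ψ θ 0 := by
  obtain ⟨hξ0, hη0, hΦ0, -⟩ := hdef
  refine ⟨fun r => ?_, fun r => ?_, ?_⟩ <;>
    simp [cauchyComp_zero, hψ, hθ, hξ0, hη0, hΦ0, Module.End.one_eq_id, Module.End.mul_eq_comp]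

theorem isOneCocycle_obstruction (hdef : IsFormalDeformation ξ0 η0 φ ξ η Φ)
    {ψ : ℕ → Module.End k M} {θ : ℕ → Module.End k N} {n : ℕ}
    (h : ∀ l ≤ n, IsTrivializingAt ξ0 η0 φ ξ η Φ ψ θ l) (hψ : ψ (n + 1) = 0)
    (hθ : θ (n + 1) = 0) :
    IsOneCocycle ξ0 η0 φ (cauchyMul ψ ξ (n + 1)) (cauchyMul θ η (n + 1)) ((θ ⋆ Φ) (n + 1)) := by
  obtain ⟨hξ0, hη0, hΦ0, hξ, hη, hΦ⟩ := hdef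
  refine ⟨cauchyMul_isCocycle ξ0 hξ0 hξ (fun l hl => (h l hl).1) hψ,
    cauchyMul_isCocycle η0 hη0 hη (fun l hl => (h l hl).2.1) hθ, fun a => ?_⟩
  have hcomm : (Φ ⋆ fun j => ξ j a) = (fun j => η j a) ⋆ Φ := funext (hΦ · a)
  have key : (θ ⋆ Φ) (n + 1) ∘ₗ ξ0 a + φ ∘ₗ cauchyMul ψ ξ (n + 1) a =
      cauchyMul θ η (n + 1) a ∘ₗ φ + η0 a ∘ₗ (θ ⋆ Φ) (n + 1) := by
    calc (θ ⋆ Φ) (n + 1) ∘ₗ ξ0 a + φ ∘ₗ cauchyMul ψ ξ (n + 1) a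
        = (θ ⋆ Φ ⋆ fun j => ξ j a) (n + 1) := by
          rw [cauchyComp_succ_of_le_eq_comp φ _ (fun i hi => (h i hi).2.2.symm) hψ,
            cauchyMul_apply, hξ0]
          rfl
      _ = (θ ⋆ (fun j => η j a) ⋆ Φ) (n + 1) := by rw [cauchyComp_assoc, hcomm, cauchyComp_assoc]
      _ = cauchyMul θ η (n + 1) a ∘ₗ φ + η0 a ∘ₗ (θ ⋆ Φ) (n + 1) := by
          rw [cauchyComp_succ_of_le_eq_comp (η0 a) _ (fun i hi => ((h i hi).2.1 a).symm) hθ,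
            cauchyMul_apply, hΦ0]
  rw [← sub_eq_zero] at key
  rw [← key]
  abel

theorem isTrivializingAt_succ (hdef : IsFormalDeformation ξ0 η0 φ ξ η Φ)
    {ψ ψ' : ℕ → Module.End k M} {θ θ' : ℕ → Module.End k N} {n : ℕ}
    (hψ : ∀ i ≤ n, ψ i = ψ' i) (hψ' : ψ' (n + 1) = 0)
    (hθ : ∀ i ≤ n, θ i = θ' i) (hθ' : θ' (n + 1) = 0)
    (hcob : IsCoboundaryOf ξ0 η0 φ (ψ (n + 1), θ (n + 1))
      (cauchyMul ψ' ξ (n + 1)) (cauchyMul θ' η (n + 1)) ((θ' ⋆ Φ) (n + 1))) :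
    IsTrivializingAt ξ0 η0 φ ξ η Φ ψ θ (n + 1) := by
  obtain ⟨hξ0, hη0, hΦ0, -⟩ := hdef
  obtain ⟨hu, hv, hw⟩ := hcob
  refine ⟨intertwinesAt_succ hξ0 hψ hψ' hu, intertwinesAt_succ hη0 hθ hθ' hv, ?_⟩
  rw [cauchyComp_succ_of_le_eq _ hθ hθ', hw, hΦ0]
  abel

theorem isTrivializingAt_trivializingIso (hdef : IsFormalDeformation ξ0 η0 φ ξ η Φ)
    {σ : (A →ₗ[k] Module.End k M) → (A →ₗ[k] Module.End k N) → (M →ₗ[k] N) →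
      Module.End k M × Module.End k N}
    (hσ : ∀ u v w, IsOneCocycle ξ0 η0 φ u v w → IsCoboundaryOf ξ0 η0 φ (σ u v w) u v w)
    (l : ℕ) :
    IsTrivializingAt ξ0 η0 φ ξ η Φ (fun i => (trivializingIso ξ η Φ σ i).1)
      (fun i => (trivializingIso ξ η Φ σ i).2) l := by
  induction l using Nat.strong_induction_on with
  | _ l ih =>
  cases l with
  | zero =>
    exact isTrivializingAt_zero hdef (by rw [trivializingIso_zero]) (by rw [trivializingIso_zero])
  | succ n =>
    set ψ' : ℕ → Module.End k M := fun i => if i ≤ n then (trivializingIso ξ η Φ σ i).1 else 0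
    set θ' : ℕ → Module.End k N := fun i => if i ≤ n then (trivializingIso ξ η Φ σ i).2 else 0
    have hψ : ∀ i ≤ n, (trivializingIso ξ η Φ σ i).1 = ψ' i := fun i hi => (if_pos hi).symm
    have hθ : ∀ i ≤ n, (trivializingIso ξ η Φ σ i).2 = θ' i := fun i hi => (if_pos hi).symm
    have hψ' : ψ' (n + 1) = 0 := if_neg (by omega)
    have hθ' : θ' (n + 1) = 0 := if_neg (by omega)
    have hprev : ∀ l ≤ n, IsTrivializingAt ξ0 η0 φ ξ η Φ ψ' θ' l := fun l hl =>
      (ih l (by omega)).congr (fun i hi => hψ i (hi.trans hl)) (fun i hi => hθ i (hi.trans hl))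
    refine isTrivializingAt_succ hdef hψ hψ' hθ hθ' ?_
    have hg : trivializingIso ξ η Φ σ (n + 1) =
        σ (cauchyMul ψ' ξ (n + 1)) (cauchyMul θ' η (n + 1)) ((θ' ⋆ Φ) (n + 1)) := by
      rw [trivializingIso]
    rw [hg]
    exact hσ _ _ _ (isOneCocycle_obstruction hdef hprev hψ' hθ')

theorem isFormalIso_trivialCoeffs {ψ : ℕ → Module.End k M} {θ : ℕ → Module.End k N}
    (hψ : ψ 0 = 1) (hθ : θ 0 = 1) (h : ∀ l, IsTrivializingAt ξ0 η0 φ ξ η Φ ψ θ l) :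
    IsFormalIso ξ η Φ (trivialCoeffs ξ0.toLinearMap) (trivialCoeffs η0.toLinearMap)
      (trivialCoeffs φ) ψ θ := by
  refine ⟨hψ, hθ, fun l r => ?_, fun l r => ?_, fun l => ?_⟩
  · change ((fun i => trivialCoeffs ξ0.toLinearMap i r) ⋆ ψ) l = _
    rw [trivialCoeffs_apply, trivialCoeffs_cauchyComp]
    exact (h l).1 r
  · change ((fun i => trivialCoeffs η0.toLinearMap i r) ⋆ θ) l = _
    rw [trivialCoeffs_apply, trivialCoeffs_cauchyComp]
    exact (h l).2.1 r
  · exact (trivialCoeffs_cauchyComp φ ψ l).trans (h l).2.2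

end Trivialization

/-- If `H¹(φ) = 0` (every 1-cocycle of the deformation complex of `φ` is a coboundary
`(δ⁰p, δ⁰q, φp - qφ)`), then `φ` is rigid: every formal one-parameter deformation of `φ`
is equivalent to the trivial deformation `(ξ₀, η₀, φ)`. -/
theorem rigid_of_H1_eq_zero (ξ0 : A →ₐ[k] Module.End k M)
    (η0 : A →ₐ[k] Module.End k N) (φ : M →ₗ[k] N)
    (h1 : ∀ (u : A →ₗ[k] Module.End k M) (v : A →ₗ[k] Module.End k N) (w : M →ₗ[k] N),
      IsOneCocycle ξ0 η0 φ u v w →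
      ∃ (p : Module.End k M) (q : Module.End k N),
        (∀ a : A, u a = ξ0 a * p - p * ξ0 a) ∧
        (∀ a : A, v a = η0 a * q - q * η0 a) ∧
        (w = φ ∘ₗ (p : M →ₗ[k] M) - (q : N →ₗ[k] N) ∘ₗ φ)) :
    ∀ (ξ : ℕ → (A →ₗ[k] Module.End k M)) (η : ℕ → (A →ₗ[k] Module.End k N))
        (Φ : ℕ → (M →ₗ[k] N)), IsFormalDeformation ξ0 η0 φ ξ η Φ →
      ∃ (ψ : ℕ → Module.End k M) (θ : ℕ → Module.End k N),
        IsFormalIso ξ η Φ (trivialCoeffs ξ0.toLinearMap) (trivialCoeffs η0.toLinearMap)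
          (trivialCoeffs φ) ψ θ := by
  intro ξ η Φ hdef
  have hprim : ∀ u v w, ∃ pq, IsOneCocycle ξ0 η0 φ u v w → IsCoboundaryOf ξ0 η0 φ pq u v w := by
    intro u v w
    by_cases hc : IsOneCocycle ξ0 η0 φ u v w
    · obtain ⟨p, q, hpq⟩ := h1 u v w hc
      exact ⟨(p, q), fun _ => hpq⟩
    · exact ⟨0, fun hc' => absurd hc' hc⟩
  choose σ hσ using hprim
  exact ⟨_, _, isFormalIso_trivialCoeffs (by rw [trivializingIso_zero])
    (by rw [trivializingIso_zero]) (isTrivializingAt_trivializingIso hdef hσ)⟩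
end

section
/- Let (ξ_t, η_t, φ_t) be a formal deformation of φ: M → N whose n-infinitesimal (ξ_n, η_n, φ_n) is a coboundary, say (ξ_n, η_n, φ_n) = d(ψ, θ, 0), i.e., ξ_n = δψ, η_n = δθ, φ_n = φψ − θφ. Set Ψ_t = Id_M + ψ t^n, Θ_t = Id_N + θ t^n, and define ξ̃_t = Ψ_t∘ξ_t∘Ψ_t^{−1}, η̃_t = Θ_t∘η_t∘Θ_t^{−1}, φ̃_t = Θ_t∘φ_t∘Ψ_t^{−1}. Then (ξ̃_t, η̃_t, φ̃_t) is a formal deformation of φ equivalent to (ξ_t, η_t, φ_t) with (ξ̃_i, η̃_i, φ̃_i) = 0 for 1 ≤ i ≤ n. -/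
open Finset

variable {k A M N : Type*} [CommRing k] [Ring A] [Algebra k A]
  [AddCommGroup M] [Module k M] [AddCommGroup N] [Module k N]

/-!
Embedding `End M`, `End N` and `Hom(M, N)` as corners of `End (M × N)` turns the coefficientwise
deformation equations into identities `Ξ(rs) = Ξ(r) Ξ(s)`, `H(rs) = H(r) H(s)`, `F Ξ(r) = H(r) F`
in the power series ring `End (M × N)⟦t⟧`, and a formal isomorphism `(Ψ_t, Θ_t)` into the unit
`G = Ψ_t ⊕ Θ_t`. Conjugation by `G` preserves these identities and the three corners, so it
transports a deformation to an equivalent one. For `G = 1 + (ψ ⊕ θ) tⁿ` the transported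
coefficients agree with the old ones below degree `n`, while in degree `n` they become
`ξₙ - δψ`, `ηₙ - δθ` and `φₙ - (φψ - θφ)`, which vanish since the `n`-infinitesimal is the
coboundary `d(ψ, θ, 0)`.
-/

open PowerSeries

lemma sum_antidiagonal_ite_snd_eq {β : Type*} [AddCommMonoid β] (g : ℕ × ℕ → β) (l n : ℕ) :
    ∑ a ∈ antidiagonal l, (if a.2 = n then g a else 0) = if n ≤ l then g (l - n, n) else 0 := by
  rw [← sum_filter]
  simp only [HasAntidiagonal.filter_snd_eq_antidiagonal (A := ℕ) l n]
  split_ifs <;> simp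

lemma sum_antidiagonal_ite_fst_eq {β : Type*} [AddCommMonoid β] (g : ℕ × ℕ → β) (l n : ℕ) :
    ∑ a ∈ antidiagonal l, (if a.1 = n then g a else 0) = if n ≤ l then g (n, l - n) else 0 := by
  rw [← sum_filter]
  simp only [HasAntidiagonal.filter_fst_eq_antidiagonal (A := ℕ) l n]
  split_ifs <;> simp

section SeriesComp

variable {X Y Z : Type*} [AddCommGroup X] [Module k X] [AddCommGroup Y] [Module k Y]
  [AddCommGroup Z] [Module k Z]

def seriesComp (f : ℕ → (Y →ₗ[k] Z)) (g : ℕ → (X →ₗ[k] Y)) : ℕ → (X →ₗ[k] Z) :=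
  fun l => ∑ ij ∈ antidiagonal l, f ij.1 ∘ₗ g ij.2

lemma seriesComp_zero (f : ℕ → (Y →ₗ[k] Z)) (g : ℕ → (X →ₗ[k] Y)) :
    seriesComp f g 0 = f 0 ∘ₗ g 0 := by
  simp [seriesComp]

lemma apply_zero_eq_of_seriesComp_eq {f f' : ℕ → (X →ₗ[k] Y)} {ψ : ℕ → Module.End k X}
    {θ : ℕ → Module.End k Y} (hψ : ψ 0 = 1) (hθ : θ 0 = 1)
    (h : seriesComp f' ψ = seriesComp θ f) : f' 0 = f 0 := by
  simpa [seriesComp_zero, hψ, hθ, Module.End.one_eq_id] using congrFun h 0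

def oneAddMonomial (n : ℕ) (ψ : Module.End k X) : ℕ → Module.End k X :=
  fun i => if i = 0 then 1 else if i = n then ψ else 0

lemma seriesComp_oneAddMonomial {n : ℕ} (hn : n ≠ 0) (f : ℕ → (X →ₗ[k] Y))
    (ψ : Module.End k X) (l : ℕ) :
    seriesComp f (oneAddMonomial n ψ) l = f l + if n ≤ l then f (l - n) ∘ₗ ψ else 0 := by
  have hsplit : ∀ ij : ℕ × ℕ, f ij.1 ∘ₗ oneAddMonomial n ψ ij.2 =
      (if ij.2 = 0 then f ij.1 else 0) + if ij.2 = n then f ij.1 ∘ₗ ψ else 0 := by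
    rintro ⟨i, j⟩
    simp only [oneAddMonomial]
    split_ifs <;> simp_all [Module.End.one_eq_id]
  simp only [seriesComp, hsplit, sum_add_distrib, sum_antidiagonal_ite_snd_eq
    (fun ij => f ij.1), sum_antidiagonal_ite_snd_eq (fun ij => f ij.1 ∘ₗ ψ)]
  simp

lemma oneAddMonomial_seriesComp {n : ℕ} (hn : n ≠ 0) (f : ℕ → (X →ₗ[k] Y))
    (θ : Module.End k Y) (l : ℕ) :
    seriesComp (oneAddMonomial n θ) f l = f l + if n ≤ l then θ ∘ₗ f (l - n) else 0 := by
  have hsplit : ∀ ij : ℕ × ℕ, (oneAddMonomial n θ ij.1 : Y →ₗ[k] Y) ∘ₗ f ij.2 =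
      (if ij.1 = 0 then f ij.2 else 0) + if ij.1 = n then θ ∘ₗ f ij.2 else 0 := by
    rintro ⟨i, j⟩
    simp only [oneAddMonomial]
    split_ifs <;> simp_all [Module.End.one_eq_id]
  simp only [seriesComp, hsplit, sum_add_distrib, sum_antidiagonal_ite_fst_eq
    (fun ij => f ij.2), sum_antidiagonal_ite_fst_eq (fun ij => θ ∘ₗ f ij.2)]
  simp

lemma eq_zero_of_seriesComp_oneAddMonomial_eq {n : ℕ} (hn : n ≠ 0) {f f' : ℕ → (X →ₗ[k] Y)}
    {ψ : Module.End k X} {θ : Module.End k Y}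
    (h : seriesComp f' (oneAddMonomial n ψ) = seriesComp (oneAddMonomial n θ) f)
    (h0 : f' 0 = f 0) (hlow : ∀ i, 1 ≤ i → i < n → f i = 0)
    (hcob : f n = f 0 ∘ₗ ψ - θ ∘ₗ f 0) {i : ℕ} (hi : 1 ≤ i) (hin : i ≤ n) : f' i = 0 := by
  have hi' := congrFun h i
  rw [seriesComp_oneAddMonomial hn, oneAddMonomial_seriesComp hn] at hi'
  rcases hin.lt_or_eq with hlt | rfl
  · simpa [hlt.not_ge, hlow i hi hlt] using hi'
  · rw [if_pos le_rfl, if_pos le_rfl, Nat.sub_self, h0, hcob] at hi'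
    exact (add_left_inj _).mp (hi'.trans (by abel))

end SeriesComp

lemma Commute.mul_units_conj_mul {R : Type*} [Monoid R] {a b : R} {u : Rˣ} (ha : Commute a u)
    (hb : Commute b u) (x : R) : a * (u * x * ↑u⁻¹) * b = u * (a * x * b) * ↑u⁻¹ := by
  simp only [mul_assoc]
  rw [← hb.units_inv_right.eq, ← mul_assoc a, ha.eq, mul_assoc]

section Blocks

variable {P X Y Z : Type*} [AddCommGroup P] [Module k P] [AddCommGroup X] [Module k X]
  [AddCommGroup Y] [Module k Y] [AddCommGroup Z] [Module k Z]

noncomputable def blockSeries (ι : Y →ₗ[k] P) (π : P →ₗ[k] X) :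
    (ℕ → (X →ₗ[k] Y)) →ₗ[k] PowerSeries (Module.End k P) where
  toFun f := mk fun i => ι ∘ₗ f i ∘ₗ π
  map_add' f g := by ext1 i; simp [LinearMap.add_comp, LinearMap.comp_add]
  map_smul' c f := by ext1 i; simp [LinearMap.smul_comp, LinearMap.comp_smul]

@[simp] lemma coeff_blockSeries (ι : Y →ₗ[k] P) (π : P →ₗ[k] X) (f : ℕ → (X →ₗ[k] Y)) (i : ℕ) :
    coeff i (blockSeries ι π f) = ι ∘ₗ f i ∘ₗ π :=
  coeff_mk _ (fun i => ι ∘ₗ f i ∘ₗ π)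

noncomputable def unblock (ρ : P →ₗ[k] Y) (σ : X →ₗ[k] P) :
    PowerSeries (Module.End k P) →ₗ[k] (ℕ → (X →ₗ[k] Y)) where
  toFun G i := ρ ∘ₗ coeff i G ∘ₗ σ
  map_add' G H := by ext1 i; simp [LinearMap.add_comp, LinearMap.comp_add]
  map_smul' c G := by ext1 i; simp [LinearMap.smul_comp, LinearMap.comp_smul]

lemma blockSeries_injective {ι : Y →ₗ[k] P} {π : P →ₗ[k] X} (hι : Function.Injective ι)
    (hπ : Function.Surjective π) : Function.Injective (blockSeries ι π) := by
  intro f g hfg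
  funext i
  have := congrArg (coeff i) hfg
  simp only [coeff_blockSeries] at this
  ext x
  obtain ⟨y, rfl⟩ := hπ x
  exact hι (LinearMap.congr_fun this y)

lemma blockSeries_seriesComp {ι : Z →ₗ[k] P} {π : P →ₗ[k] Y} {ι' : Y →ₗ[k] P} {π' : P →ₗ[k] X}
    (h : π ∘ₗ ι' = LinearMap.id) (f : ℕ → (Y →ₗ[k] Z)) (g : ℕ → (X →ₗ[k] Y)) :
    blockSeries ι π' (seriesComp f g) = blockSeries ι π f * blockSeries ι' π' g := by
  have h' : ∀ y, π (ι' y) = y := LinearMap.congr_fun h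
  ext l x
  simp [coeff_mul, seriesComp, LinearMap.sum_apply, h']

lemma blockSeries_mul_blockSeries_eq_zero {W : Type*} [AddCommGroup W] [Module k W]
    {ι : Z →ₗ[k] P} {π : P →ₗ[k] Y} {ι' : W →ₗ[k] P} {π' : P →ₗ[k] X}
    (h : π ∘ₗ ι' = 0) (f : ℕ → (Y →ₗ[k] Z)) (g : ℕ → (X →ₗ[k] W)) :
    blockSeries ι π f * blockSeries ι' π' g = 0 := by
  have h' : ∀ y, π (ι' y) = 0 := LinearMap.congr_fun h
  ext l x
  simp [coeff_mul, LinearMap.sum_apply, h']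

lemma blockSeries_unblock (ι : Y →ₗ[k] P) (π : P →ₗ[k] X) (ρ : P →ₗ[k] Y) (σ : X →ₗ[k] P)
    (G : PowerSeries (Module.End k P)) :
    blockSeries ι π (unblock ρ σ G) = C (ι ∘ₗ ρ) * G * C (σ ∘ₗ π) := by
  ext1 i
  rw [coeff_mul_C, coeff_C_mul, coeff_blockSeries]
  rfl

lemma C_mul_blockSeries_mul_C {ι : Y →ₗ[k] P} {π : P →ₗ[k] X} {ρ : P →ₗ[k] Y} {σ : X →ₗ[k] P}
    (hρ : ρ ∘ₗ ι = LinearMap.id) (hσ : π ∘ₗ σ = LinearMap.id) (f : ℕ → (X →ₗ[k] Y)) :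
    C (ι ∘ₗ ρ) * blockSeries ι π f * C (σ ∘ₗ π) = blockSeries ι π f := by
  have hρ' : ∀ y, ρ (ι y) = y := LinearMap.congr_fun hρ
  have hσ' : ∀ x, π (σ x) = x := LinearMap.congr_fun hσ
  ext i x
  simp [coeff_mul_C, coeff_C_mul, hρ', hσ']

noncomputable def conjCoeffs (u : (PowerSeries (Module.End k P))ˣ) (ι : Y →ₗ[k] P) (π : P →ₗ[k] X)
    (ρ : P →ₗ[k] Y) (σ : X →ₗ[k] P) : (ℕ → (X →ₗ[k] Y)) →ₗ[k] (ℕ → (X →ₗ[k] Y)) :=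
  unblock ρ σ ∘ₗ LinearMap.mulLeft k (u : PowerSeries (Module.End k P)) ∘ₗ
    LinearMap.mulRight k (↑u⁻¹ : PowerSeries (Module.End k P)) ∘ₗ blockSeries ι π

lemma blockSeries_conjCoeffs (u : (PowerSeries (Module.End k P))ˣ) {ι : Y →ₗ[k] P} {π : P →ₗ[k] X}
    {ρ : P →ₗ[k] Y} {σ : X →ₗ[k] P} (hρ : ρ ∘ₗ ι = LinearMap.id) (hσ : π ∘ₗ σ = LinearMap.id)
    (hιρ : Commute (C (ι ∘ₗ ρ)) (u : PowerSeries (Module.End k P)))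
    (hσπ : Commute (C (σ ∘ₗ π)) (u : PowerSeries (Module.End k P))) (f : ℕ → (X →ₗ[k] Y)) :
    blockSeries ι π (conjCoeffs u ι π ρ σ f) = u * blockSeries ι π f * ↑u⁻¹ := by
  simp only [conjCoeffs, LinearMap.comp_apply, LinearMap.mulLeft_apply, LinearMap.mulRight_apply,
    blockSeries_unblock]
  rw [← mul_assoc (u : PowerSeries (Module.End k P)), hιρ.mul_units_conj_mul hσπ,
    C_mul_blockSeries_mul_C hρ hσ]

lemma exists_blockSeries_eq_conj {V : Type*} [AddCommGroup V] [Module k V]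
    (u : (PowerSeries (Module.End k P))ˣ) {ι : Y →ₗ[k] P} {π : P →ₗ[k] X}
    {ρ : P →ₗ[k] Y} {σ : X →ₗ[k] P} (hρ : ρ ∘ₗ ι = LinearMap.id) (hσ : π ∘ₗ σ = LinearMap.id)
    (hιρ : Commute (C (ι ∘ₗ ρ)) (u : PowerSeries (Module.End k P)))
    (hσπ : Commute (C (σ ∘ₗ π)) (u : PowerSeries (Module.End k P)))
    (ξ : ℕ → (V →ₗ[k] X →ₗ[k] Y)) :
    ∃ ξ' : ℕ → (V →ₗ[k] X →ₗ[k] Y), ∀ r,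
      blockSeries ι π (ξ' · r) = u * blockSeries ι π (ξ · r) * ↑u⁻¹ :=
  ⟨fun l => LinearMap.proj l ∘ₗ conjCoeffs u ι π ρ σ ∘ₗ LinearMap.pi ξ,
    fun _ => blockSeries_conjCoeffs u hρ hσ hιρ hσπ _⟩

end Blocks

section Diagonal

open LinearMap

variable {X Y : Type*} [AddCommGroup X] [Module k X] [AddCommGroup Y] [Module k Y]

noncomputable def diagSeries (ψ : ℕ → Module.End k M) (θ : ℕ → Module.End k N) :
    PowerSeries (Module.End k (M × N)) :=
  blockSeries (inl k M N) (fst k M N) ψ + blockSeries (inr k M N) (snd k M N) θ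

variable {ψ : ℕ → Module.End k M} {θ : ℕ → Module.End k N}

lemma isUnit_diagSeries (hψ : ψ 0 = 1) (hθ : θ 0 = 1) : IsUnit (diagSeries ψ θ) := by
  have h0 : coeff 0 (diagSeries ψ θ) = 1 := by
    ext x <;> simp [diagSeries, hψ, hθ, -coeff_zero_eq_constantCoeff]
  rw [isUnit_iff_constantCoeff, ← coeff_zero_eq_constantCoeff_apply, h0]
  exact isUnit_one

lemma commute_C_inl_comp_fst_diagSeries :
    Commute (C (inl k M N ∘ₗ fst k M N)) (diagSeries ψ θ) := by
  ext i x <;> simp [diagSeries, coeff_C_mul, coeff_mul_C]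

lemma commute_C_inr_comp_snd_diagSeries :
    Commute (C (inr k M N ∘ₗ snd k M N)) (diagSeries ψ θ) := by
  ext i x <;> simp [diagSeries, coeff_C_mul, coeff_mul_C]

lemma blockSeries_fst_mul_diagSeries (ι : Y →ₗ[k] M × N) (f : ℕ → (M →ₗ[k] Y)) :
    blockSeries ι (fst k M N) f * diagSeries ψ θ = blockSeries ι (fst k M N) (seriesComp f ψ) := by
  rw [diagSeries, mul_add, ← blockSeries_seriesComp (fst_comp_inl k M N),
    blockSeries_mul_blockSeries_eq_zero (fst_comp_inr k M N), add_zero]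

lemma blockSeries_snd_mul_diagSeries (ι : Y →ₗ[k] M × N) (f : ℕ → (N →ₗ[k] Y)) :
    blockSeries ι (snd k M N) f * diagSeries ψ θ = blockSeries ι (snd k M N) (seriesComp f θ) := by
  rw [diagSeries, mul_add, ← blockSeries_seriesComp (snd_comp_inr k M N),
    blockSeries_mul_blockSeries_eq_zero (snd_comp_inl k M N), zero_add]

lemma diagSeries_mul_blockSeries_inl (π : M × N →ₗ[k] X) (f : ℕ → (X →ₗ[k] M)) :
    diagSeries ψ θ * blockSeries (inl k M N) π f = blockSeries (inl k M N) π (seriesComp ψ f) := by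
  rw [diagSeries, add_mul, ← blockSeries_seriesComp (fst_comp_inl k M N),
    blockSeries_mul_blockSeries_eq_zero (snd_comp_inl k M N), add_zero]

lemma diagSeries_mul_blockSeries_inr (π : M × N →ₗ[k] X) (f : ℕ → (X →ₗ[k] N)) :
    diagSeries ψ θ * blockSeries (inr k M N) π f = blockSeries (inr k M N) π (seriesComp θ f) := by
  rw [diagSeries, add_mul, ← blockSeries_seriesComp (snd_comp_inr k M N),
    blockSeries_mul_blockSeries_eq_zero (fst_comp_inr k M N), zero_add]

end Diagonal

section Transport

open LinearMap

variable {ξ0 : A →ₐ[k] Module.End k M} {η0 : A →ₐ[k] Module.End k N} {φ : M →ₗ[k] N}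
  {ξ ξ' : ℕ → (A →ₗ[k] Module.End k M)} {η η' : ℕ → (A →ₗ[k] Module.End k N)}
  {Φ Φ' : ℕ → (M →ₗ[k] N)} {ψ : ℕ → Module.End k M} {θ : ℕ → Module.End k N}
  (u : (PowerSeries (Module.End k (M × N)))ˣ)

lemma isFormalIso_of_blockSeries_eq_conj (hψ : ψ 0 = 1) (hθ : θ 0 = 1)
    (hu : (u : PowerSeries (Module.End k (M × N))) = diagSeries ψ θ)
    (hξ' : ∀ r, blockSeries (inl k M N) (fst k M N) (ξ' · r) =
      u * blockSeries (inl k M N) (fst k M N) (ξ · r) * ↑u⁻¹)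
    (hη' : ∀ r, blockSeries (inr k M N) (snd k M N) (η' · r) =
      u * blockSeries (inr k M N) (snd k M N) (η · r) * ↑u⁻¹)
    (hΦ' : blockSeries (inr k M N) (fst k M N) Φ' =
      u * blockSeries (inr k M N) (fst k M N) Φ * ↑u⁻¹) :
    IsFormalIso ξ η Φ ξ' η' Φ' ψ θ := by
  have isoξ : ∀ r, seriesComp (ξ' · r) ψ = seriesComp ψ (ξ · r) := fun r =>
    blockSeries_injective (ι := inl k M N) (π := fst k M N) inl_injective fst_surjective <| by
      rw [← blockSeries_fst_mul_diagSeries, ← diagSeries_mul_blockSeries_inl, ← hu, hξ',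
        Units.inv_mul_cancel_right]
  have isoη : ∀ r, seriesComp (η' · r) θ = seriesComp θ (η · r) := fun r =>
    blockSeries_injective (ι := inr k M N) (π := snd k M N) inr_injective snd_surjective <| by
      rw [← blockSeries_snd_mul_diagSeries, ← diagSeries_mul_blockSeries_inr, ← hu, hη',
        Units.inv_mul_cancel_right]
  have isoΦ : seriesComp Φ' ψ = seriesComp θ Φ :=
    blockSeries_injective (ι := inr k M N) (π := fst k M N) inr_injective fst_surjective <| by
      rw [← blockSeries_fst_mul_diagSeries, ← diagSeries_mul_blockSeries_inr, ← hu, hΦ',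
        Units.inv_mul_cancel_right]
  exact ⟨hψ, hθ, fun l r => congrFun (isoξ r) l, fun l r => congrFun (isoη r) l,
    congrFun isoΦ⟩

lemma IsFormalDeformation.of_blockSeries_eq_conj (hdef : IsFormalDeformation ξ0 η0 φ ξ η Φ)
    (hiso : IsFormalIso ξ η Φ ξ' η' Φ' ψ θ)
    (hξ' : ∀ r, blockSeries (inl k M N) (fst k M N) (ξ' · r) =
      u * blockSeries (inl k M N) (fst k M N) (ξ · r) * ↑u⁻¹)
    (hη' : ∀ r, blockSeries (inr k M N) (snd k M N) (η' · r) =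
      u * blockSeries (inr k M N) (snd k M N) (η · r) * ↑u⁻¹)
    (hΦ' : blockSeries (inr k M N) (fst k M N) Φ' =
      u * blockSeries (inr k M N) (fst k M N) Φ * ↑u⁻¹) :
    IsFormalDeformation ξ0 η0 φ ξ' η' Φ' := by
  obtain ⟨hξ0, hη0, hΦ0, hξ, hη, hΦ⟩ := hdef
  obtain ⟨hψ, hθ, isoξ, isoη, isoΦ⟩ := hiso
  have multξ' : ∀ r s, (ξ' · (r * s)) = seriesComp (ξ' · r) (ξ' · s) := fun r s =>
    blockSeries_injective (ι := inl k M N) (π := fst k M N) inl_injective fst_surjective <| by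
      have hΞ : (ξ · (r * s)) = seriesComp (ξ · r) (ξ · s) := funext fun l => hξ l r s
      rw [blockSeries_seriesComp (fst_comp_inl k M N), hξ', hξ', hξ', hΞ,
        blockSeries_seriesComp (fst_comp_inl k M N)]
      simp only [mul_assoc, Units.inv_mul_cancel_left]
  have multη' : ∀ r s, (η' · (r * s)) = seriesComp (η' · r) (η' · s) := fun r s =>
    blockSeries_injective (ι := inr k M N) (π := snd k M N) inr_injective snd_surjective <| by
      have hH : (η · (r * s)) = seriesComp (η · r) (η · s) := funext fun l => hη l r s
      rw [blockSeries_seriesComp (snd_comp_inr k M N), hη', hη', hη', hH,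
        blockSeries_seriesComp (snd_comp_inr k M N)]
      simp only [mul_assoc, Units.inv_mul_cancel_left]
  have compat' : ∀ r, seriesComp Φ' (ξ' · r) = seriesComp (η' · r) Φ' := fun r =>
    blockSeries_injective (ι := inr k M N) (π := fst k M N) inr_injective fst_surjective <| by
      have hF : seriesComp Φ (ξ · r) = seriesComp (η · r) Φ := funext fun l => hΦ l r
      rw [blockSeries_seriesComp (fst_comp_inl k M N), blockSeries_seriesComp (snd_comp_inr k M N),
        hΦ', hξ', hη']
      simp only [mul_assoc, Units.inv_mul_cancel_left]
      rw [← mul_assoc (blockSeries _ _ Φ), ← blockSeries_seriesComp (fst_comp_inl k M N), hF,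
        blockSeries_seriesComp (snd_comp_inr k M N), mul_assoc]
  refine ⟨?_, ?_, ?_, fun l r s => congrFun (multξ' r s) l, fun l r s => congrFun (multη' r s) l,
    fun l r => congrFun (compat' r) l⟩
  · ext1 r
    rw [apply_zero_eq_of_seriesComp_eq (f' := (ξ' · r)) (f := (ξ · r)) hψ hψ
      (funext fun l => isoξ l r), hξ0]
  · ext1 r
    rw [apply_zero_eq_of_seriesComp_eq (f' := (η' · r)) (f := (η · r)) hθ hθ
      (funext fun l => isoη l r), hη0]
  · rw [apply_zero_eq_of_seriesComp_eq hψ hθ (funext isoΦ), hΦ0]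

theorem IsFormalDeformation.exists_isFormalIso (hdef : IsFormalDeformation ξ0 η0 φ ξ η Φ)
    (hψ : ψ 0 = 1) (hθ : θ 0 = 1) :
    ∃ (ξ' : ℕ → (A →ₗ[k] Module.End k M)) (η' : ℕ → (A →ₗ[k] Module.End k N))
      (Φ' : ℕ → (M →ₗ[k] N)),
      IsFormalDeformation ξ0 η0 φ ξ' η' Φ' ∧ IsFormalIso ξ η Φ ξ' η' Φ' ψ θ := by
  obtain ⟨u, hu⟩ := isUnit_diagSeries hψ hθ
  have hM : Commute (C (inl k M N ∘ₗ fst k M N)) (u : PowerSeries (Module.End k (M × N))) :=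
    hu ▸ commute_C_inl_comp_fst_diagSeries
  have hN : Commute (C (inr k M N ∘ₗ snd k M N)) (u : PowerSeries (Module.End k (M × N))) :=
    hu ▸ commute_C_inr_comp_snd_diagSeries
  obtain ⟨ξ', hξ'⟩ := exists_blockSeries_eq_conj u (fst_comp_inl k M N) (fst_comp_inl k M N) hM hM ξ
  obtain ⟨η', hη'⟩ := exists_blockSeries_eq_conj u (snd_comp_inr k M N) (snd_comp_inr k M N) hN hN η
  have hΦ' := blockSeries_conjCoeffs u (snd_comp_inr k M N) (fst_comp_inl k M N) hN hM Φ
  have hiso := isFormalIso_of_blockSeries_eq_conj u hψ hθ hu hξ' hη' hΦ'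
  exact ⟨ξ', η', _, hdef.of_blockSeries_eq_conj u hiso hξ' hη' hΦ', hiso⟩

end Transport

/-- If the `n`-infinitesimal `(ξₙ, ηₙ, φₙ)` of a formal deformation `(ξ_t, η_t, φ_t)` of
`φ` is a coboundary `d(ψ, θ, 0)`, i.e. `ξₙ = δψ`, `ηₙ = δθ`, `φₙ = φψ - θφ`, then with
`Ψ_t = Id_M + ψ tⁿ` and `Θ_t = Id_N + θ tⁿ`, the conjugated triple
`(Ψ_t ξ_t Ψ_t⁻¹, Θ_t η_t Θ_t⁻¹, Θ_t φ_t Ψ_t⁻¹)` is a formal deformation of `φ`,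
equivalent to `(ξ_t, η_t, φ_t)` via `(Ψ_t, Θ_t)`, whose coefficients vanish in degrees
`1 ≤ i ≤ n`. -/
theorem equivalent_deformation_of_coboundary_infinitesimal (ξ0 : A →ₐ[k] Module.End k M)
    (η0 : A →ₐ[k] Module.End k N) (φ : M →ₗ[k] N)
    (ξ : ℕ → (A →ₗ[k] Module.End k M)) (η : ℕ → (A →ₗ[k] Module.End k N))
    (Φ : ℕ → (M →ₗ[k] N)) (hdef : IsFormalDeformation ξ0 η0 φ ξ η Φ)
    (n : ℕ) (hn : 1 ≤ n)
    (hvanish : ∀ i, 1 ≤ i → i < n → ξ i = 0 ∧ η i = 0 ∧ Φ i = 0)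
    (ψ : Module.End k M) (θ : Module.End k N)
    (hξn : ∀ a : A, ξ n a = ξ0 a * ψ - ψ * ξ0 a)
    (hηn : ∀ a : A, η n a = η0 a * θ - θ * η0 a)
    (hΦn : Φ n = φ ∘ₗ (ψ : M →ₗ[k] M) - (θ : N →ₗ[k] N) ∘ₗ φ) :
    ∃ (ξ' : ℕ → (A →ₗ[k] Module.End k M)) (η' : ℕ → (A →ₗ[k] Module.End k N))
        (Φ' : ℕ → (M →ₗ[k] N)),
      IsFormalDeformation ξ0 η0 φ ξ' η' Φ' ∧
      IsFormalIso ξ η Φ ξ' η' Φ'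
        (fun i => if i = 0 then 1 else if i = n then ψ else 0)
        (fun i => if i = 0 then 1 else if i = n then θ else 0) ∧
      (∀ i, 1 ≤ i → i ≤ n → ξ' i = 0 ∧ η' i = 0 ∧ Φ' i = 0) := by
  have hn0 : n ≠ 0 := Nat.one_le_iff_ne_zero.mp hn
  obtain ⟨ξ', η', Φ', hdef', hiso⟩ :=
    hdef.exists_isFormalIso (ψ := oneAddMonomial n ψ) (θ := oneAddMonomial n θ) rfl rfl
  refine ⟨ξ', η', Φ', hdef', hiso, fun i hi hin => ?_⟩
  obtain ⟨hξ0, hη0, hΦ0, -⟩ := hdef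
  obtain ⟨hξ0', hη0', hΦ0', -⟩ := hdef'
  obtain ⟨-, -, isoξ, isoη, isoΦ⟩ := hiso
  refine ⟨?_, ?_, ?_⟩
  · ext1 r
    refine eq_zero_of_seriesComp_oneAddMonomial_eq (f' := (ξ' · r)) (f := (ξ · r)) hn0
      (funext fun l => isoξ l r) ?_
      (fun j hj hjn => by simp [(hvanish j hj hjn).1]) ?_ hi hin
    · simp [hξ0, hξ0']
    · simp [hξn, hξ0, Module.End.mul_eq_comp]
  · ext1 r
    refine eq_zero_of_seriesComp_oneAddMonomial_eq (f' := (η' · r)) (f := (η · r)) hn0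
      (funext fun l => isoη l r) ?_
      (fun j hj hjn => by simp [(hvanish j hj hjn).2.1]) ?_ hi hin
    · simp [hη0, hη0']
    · simp [hηn, hη0, Module.End.mul_eq_comp]
  · refine eq_zero_of_seriesComp_oneAddMonomial_eq hn0 (funext isoΦ) (by rw [hΦ0, hΦ0'])
      (fun j hj hjn => (hvanish j hj hjn).2.2) (by rw [hΦn, hΦ0]) hi hin
end

section
/- Let (ξ_t, η_t, φ_t) be a deformation of order n of φ and suppose Ob_{n+1}(φ_t) = d^1(ξ_{n+1}, η_{n+1}, φ_{n+1}) for some (ξ_{n+1}, η_{n+1}, φ_{n+1}) ∈ C^1(φ). Then (ξ_t + ξ_{n+1}t^{n+1}, η_t + η_{n+1}t^{n+1}, φ_t + φ_{n+1}t^{n+1}) is a deformation of φ of order n+1 extending (ξ_t, η_t, φ_t). -/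
open Finset

variable {k A M N : Type*} [CommRing k] [Ring A] [Algebra k A]
  [AddCommGroup M] [Module k M] [AddCommGroup N] [Module k N]

/-! Adjoining terms of degree `n + 1` leaves the coefficient equations of degree `≤ n`
untouched, as these only involve coefficients of index `≤ n`. In degree `n + 1` the new terms
enter each convolution sum only through its two end terms `(0, n + 1)` and `(n + 1, 0)`;
moving them to one side, the degree-`(n + 1)` equation becomes exactly the corresponding
component of `d¹(ξ_{n+1}, η_{n+1}, φ_{n+1}) = Ob_{n+1}`. -/

section Truncation

variable {α β G : Type*} [AddCommMonoid G] (F : α → β → G) (f : ℕ → α) (g : ℕ → β) (a : α) (b : β)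

theorem sum_update_update_of_forall_ne {s : Finset (ℕ × ℕ)} {m : ℕ}
    (hs : ∀ ij ∈ s, ij.1 ≠ m ∧ ij.2 ≠ m) :
    ∑ ij ∈ s, F (Function.update f m a ij.1) (Function.update g m b ij.2) =
      ∑ ij ∈ s, F (f ij.1) (g ij.2) :=
  sum_congr rfl fun ij hij => by
    rw [Function.update_of_ne (hs ij hij).1, Function.update_of_ne (hs ij hij).2]

theorem sum_antidiagonal_update_of_le {l n : ℕ} (hl : l ≤ n) :
    ∑ ij ∈ antidiagonal l,
        F (Function.update f (n + 1) a ij.1) (Function.update g (n + 1) b ij.2) =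
      ∑ ij ∈ antidiagonal l, F (f ij.1) (g ij.2) :=
  sum_update_update_of_forall_ne F f g a b fun ij hij => by
    rw [HasAntidiagonal.mem_antidiagonal] at hij
    omega

theorem sum_antidiagonal_succ_update (n : ℕ) :
    ∑ ij ∈ antidiagonal (n + 1),
        F (Function.update f (n + 1) a ij.1) (Function.update g (n + 1) b ij.2) =
      F (f 0) b + F a (g 0) +
        ∑ ij ∈ (antidiagonal (n + 1)).filter (fun ij => ij.1 ≠ 0 ∧ ij.2 ≠ 0),
          F (f ij.1) (g ij.2) := by
  rw [← sum_filter_not_add_sum_filter _ (fun ij : ℕ × ℕ => ij.1 ≠ 0 ∧ ij.2 ≠ 0)]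
  have hends : (antidiagonal (n + 1)).filter (fun ij => ¬(ij.1 ≠ 0 ∧ ij.2 ≠ 0)) =
      {(0, n + 1), (n + 1, 0)} := by
    ext ⟨i, j⟩
    simp only [mem_filter, HasAntidiagonal.mem_antidiagonal, mem_insert, mem_singleton,
      Prod.mk.injEq]
    omega
  rw [hends, sum_pair (by simp), sum_update_update_of_forall_ne F f g a b fun ij hij => by
    rw [mem_filter, HasAntidiagonal.mem_antidiagonal] at hij
    omega]
  simp

end Truncation

theorem map_mul_coeff_update_of_coboundary {R : Type*} [Ring R] [Algebra k R]
    (ξ0 : A →ₐ[k] R) (ξ : ℕ → (A →ₗ[k] R)) (u : A →ₗ[k] R) {n : ℕ}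
    (h0 : ξ 0 = ξ0.toLinearMap)
    (hξ : ∀ l ≤ n, ∀ r s : A, ξ l (r * s) = ∑ ij ∈ antidiagonal l, ξ ij.1 r * ξ ij.2 s)
    (hu : ∀ r s : A, ξ0 r * u s - u (r * s) + u r * ξ0 s =
      -∑ ij ∈ (antidiagonal (n + 1)).filter (fun ij => ij.1 ≠ 0 ∧ ij.2 ≠ 0),
        ξ ij.1 r * ξ ij.2 s) :
    ∀ l ≤ n + 1, ∀ r s : A, Function.update ξ (n + 1) u l (r * s) =
      ∑ ij ∈ antidiagonal l,
        Function.update ξ (n + 1) u ij.1 r * Function.update ξ (n + 1) u ij.2 s := by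
  intro l hl r s
  rcases hl.lt_or_eq with hl | rfl
  · have hl : l ≤ n := Nat.lt_succ_iff.mp hl
    rw [Function.update_of_ne (by omega), sum_antidiagonal_update_of_le
      (fun x y : A →ₗ[k] R => x r * y s) ξ ξ u u hl]
    exact hξ l hl r s
  · rw [Function.update_self, sum_antidiagonal_succ_update
      (fun x y : A →ₗ[k] R => x r * y s), h0]
    simp only [AlgHom.toLinearMap_apply]
    linear_combination (norm := abel) -hu r s

theorem intertwine_coeff_update_of_coboundary (ξ0 : A →ₐ[k] Module.End k M)
    (η0 : A →ₐ[k] Module.End k N) (φ : M →ₗ[k] N)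
    (ξ : ℕ → (A →ₗ[k] Module.End k M)) (η : ℕ → (A →ₗ[k] Module.End k N))
    (Φ : ℕ → (M →ₗ[k] N)) {n : ℕ} (hξ0 : ξ 0 = ξ0.toLinearMap) (hη0 : η 0 = η0.toLinearMap)
    (hΦ0 : Φ 0 = φ)
    (hΦ : ∀ l ≤ n, ∀ r : A, ∑ ij ∈ antidiagonal l, Φ ij.1 ∘ₗ (ξ ij.2 r : M →ₗ[k] M) =
      ∑ ij ∈ antidiagonal l, (η ij.1 r : N →ₗ[k] N) ∘ₗ Φ ij.2)
    (u : A →ₗ[k] Module.End k M) (v : A →ₗ[k] Module.End k N) (w : M →ₗ[k] N)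
    (hw : ∀ r : A, φ ∘ₗ (u r : M →ₗ[k] M) - (v r : N →ₗ[k] N) ∘ₗ φ -
      ((η0 r : N →ₗ[k] N) ∘ₗ w - w ∘ₗ (ξ0 r : M →ₗ[k] M)) =
      ∑ ij ∈ (antidiagonal (n + 1)).filter (fun ij => ij.1 ≠ 0 ∧ ij.2 ≠ 0),
        ((η ij.1 r : N →ₗ[k] N) ∘ₗ Φ ij.2 - Φ ij.1 ∘ₗ (ξ ij.2 r : M →ₗ[k] M))) :
    ∀ l ≤ n + 1, ∀ r : A,
      ∑ ij ∈ antidiagonal l, Function.update Φ (n + 1) w ij.1 ∘ₗ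
        (Function.update ξ (n + 1) u ij.2 r : M →ₗ[k] M) =
      ∑ ij ∈ antidiagonal l, (Function.update η (n + 1) v ij.1 r : N →ₗ[k] N) ∘ₗ
        Function.update Φ (n + 1) w ij.2 := by
  intro l hl r
  let leftTerm (ψ : M →ₗ[k] N) (x : A →ₗ[k] Module.End k M) : M →ₗ[k] N := ψ ∘ₗ x r
  let rightTerm (y : A →ₗ[k] Module.End k N) (ψ : M →ₗ[k] N) : M →ₗ[k] N := y r ∘ₗ ψ
  rcases hl.lt_or_eq with hl | rfl
  · have hl : l ≤ n := Nat.lt_succ_iff.mp hl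
    rw [sum_antidiagonal_update_of_le leftTerm Φ ξ w u hl,
      sum_antidiagonal_update_of_le rightTerm η Φ v w hl]
    exact hΦ l hl r
  · rw [sum_antidiagonal_succ_update leftTerm, sum_antidiagonal_succ_update rightTerm,
      hξ0, hη0, hΦ0]
    simp only [leftTerm, rightTerm, AlgHom.toLinearMap_apply]
    linear_combination (norm := abel) (hw r).trans (sum_sub_distrib ..)

/-- If `(ξ_t, η_t, φ_t)` is a deformation of order `n` of `φ` and the obstruction
`Ob_{n+1}(φ_t)` equals `d¹(ξ_{n+1}, η_{n+1}, φ_{n+1})`, then adjoining the terms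
`ξ_{n+1}t^{n+1}`, `η_{n+1}t^{n+1}`, `φ_{n+1}t^{n+1}` yields a deformation of order `n+1`
extending `(ξ_t, η_t, φ_t)`. -/
theorem extend_of_obstruction_eq_coboundary (ξ0 : A →ₐ[k] Module.End k M)
    (η0 : A →ₐ[k] Module.End k N) (φ : M →ₗ[k] N)
    (ξ : ℕ → (A →ₗ[k] Module.End k M)) (η : ℕ → (A →ₗ[k] Module.End k N))
    (Φ : ℕ → (M →ₗ[k] N)) (n : ℕ) (h : IsDeformationOfOrder ξ0 η0 φ ξ η Φ n)
    (u : A →ₗ[k] Module.End k M) (v : A →ₗ[k] Module.End k N) (w : M →ₗ[k] N)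
    (hob : dOne ξ0 η0 φ u v w = obstruction ξ η Φ n) :
    IsDeformationOfOrder ξ0 η0 φ
      (Function.update ξ (n + 1) u) (Function.update η (n + 1) v)
      (Function.update Φ (n + 1) w) (n + 1) := by
  obtain ⟨hξ0, hη0, hΦ0, hξ, hη, hΦ⟩ := h
  simp only [dOne, obstruction, Prod.mk.injEq, funext_iff] at hob
  obtain ⟨hu, hv, hw⟩ := hob
  have h0 : (0 : ℕ) ≠ n + 1 := (Nat.succ_ne_zero n).symm
  exact ⟨(Function.update_of_ne h0 _ _).trans hξ0, (Function.update_of_ne h0 _ _).trans hη0,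
    (Function.update_of_ne h0 _ _).trans hΦ0,
    map_mul_coeff_update_of_coboundary ξ0 ξ u hξ0 hξ hu,
    map_mul_coeff_update_of_coboundary η0 η v hη0 hη hv,
    intertwine_coeff_update_of_coboundary ξ0 η0 φ ξ η Φ hξ0 hη0 hΦ0 hΦ u v w hw⟩
end
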